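/- arXiv:0901.2714 — 5 statements merged into one kernel-verified Lean document; each statement's English description precedes it below -/
import Mathlib

section
/- Let M be a real-valued random variable on a probability space (Ω,F,P) such that E[e^{λM}] < ∞ for every λ > 0 and P(M > 0) > 0. Write T_M(z) = P(M > z). Then E[e^{λM}] ~ λ ∫_0^∞ e^{λz} T_M(z) dz as λ → +∞, i.e. the ratio of the two sides tends to 1. -/
open MeasureTheory Filter Real Set Asymptotics Topology ProbabilityTheory

/-!
With `M⁺ = max M 0`, the layer cake formula applied to `e^{λM⁺} - 1 = ∫_0^{M⁺} λ e^{λt} dt` gives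
`λ ∫_0^∞ e^{λz} P(M > z) dz = E[e^{λM⁺}] - 1`, while `E[e^{λM}] ≤ E[e^{λM⁺}] ≤ E[e^{λM}] + 1`.
So the denominator is within `1` of `E[e^{λM}]`, which tends to infinity since `M ≥ ε` with
positive probability for some `ε > 0`.
-/

theorem integral_mul_exp_mul_eq_sub_one (lam x : ℝ) :
    ∫ t in (0 : ℝ)..x, lam * exp (lam * t) = exp (lam * x) - 1 := by
  rw [intervalIntegral.integral_eq_sub_of_hasDerivAt
    (fun t _ => by simpa [mul_comm] using ((hasDerivAt_id t).const_mul lam).exp)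
    ((by fun_prop : Continuous fun t => lam * exp (lam * t)).intervalIntegrable _ _)]
  simp

theorem integral_exp_mul_sub_one_eq_mul_integral_tail {Ω : Type*} [MeasurableSpace Ω]
    {μ : Measure Ω} [IsFiniteMeasure μ] {f : Ω → ℝ} {lam : ℝ} (hf_nn : 0 ≤ᵐ[μ] f)
    (hf : AEMeasurable f μ) (hlam : 0 ≤ lam)
    (hint : Integrable (fun ω => exp (lam * f ω)) μ) :
    ∫ ω, (exp (lam * f ω) - 1) ∂μ = lam * ∫ t in Ioi 0, exp (lam * t) * μ.real {ω | t < f ω} := by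
  have h_nn : 0 ≤ᵐ[μ] fun ω => exp (lam * f ω) - 1 := hf_nn.mono fun ω hω => by
    simpa using one_le_exp (mul_nonneg hlam hω)
  have h_tail_meas : Measurable fun t : ℝ => μ {ω | t < f ω} :=
    Antitone.measurable fun s t hst => measure_mono fun ω hω => hst.trans_lt hω
  have h_layer := lintegral_comp_eq_lintegral_meas_lt_mul μ hf_nn hf
    (fun t _ => (by fun_prop : Continuous fun t => lam * exp (lam * t)).intervalIntegrable 0 t)
    (Eventually.of_forall fun t => by positivity)
  simp only [integral_mul_exp_mul_eq_sub_one] at h_layer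
  calc ∫ ω, (exp (lam * f ω) - 1) ∂μ
      = (∫⁻ t in Ioi 0, μ {ω | t < f ω} * ENNReal.ofReal (lam * exp (lam * t))).toReal := by
        rw [integral_eq_lintegral_of_nonneg_ae h_nn (hint.sub (integrable_const 1)).1, h_layer]
    _ = ∫ t in Ioi 0, (μ {ω | t < f ω} * ENNReal.ofReal (lam * exp (lam * t))).toReal := by
        refine (integral_toReal (h_tail_meas.mul (by fun_prop)).aemeasurable
          (Eventually.of_forall fun t => ?_)).symm
        exact ENNReal.mul_lt_top (measure_lt_top μ _) ENNReal.ofReal_lt_top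
    _ = lam * ∫ t in Ioi 0, exp (lam * t) * μ.real {ω | t < f ω} := by
        rw [← integral_const_mul]
        congr 1 with t
        rw [ENNReal.toReal_mul, ENNReal.toReal_ofReal (by positivity), measureReal_def]
        ring

theorem exp_mul_le_exp_mul_max_zero {lam : ℝ} (hlam : 0 ≤ lam) (x : ℝ) :
    exp (lam * x) ≤ exp (lam * max x 0) :=
  exp_le_exp.2 (mul_le_mul_of_nonneg_left (le_max_left x 0) hlam)

theorem exp_mul_max_zero_le_exp_mul_add_one (lam x : ℝ) :
    exp (lam * max x 0) ≤ exp (lam * x) + 1 := by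
  rcases le_total x 0 with hx | hx
  · simpa [max_eq_right hx] using (exp_pos (lam * x)).le
  · simp [max_eq_left hx]

theorem tendsto_div_of_le_of_le_add_one {α : Type*} {l : Filter α} {u v : α → ℝ}
    (hu : Tendsto u l atTop) (hvu : ∀ᶠ x in l, v x ≤ u x) (huv : ∀ᶠ x in l, u x ≤ v x + 1) :
    Tendsto (fun x => u x / v x) l (𝓝 1) := by
  have hv : Tendsto v l atTop := tendsto_atTop_mono' l (huv.mono fun x hx => by linarith)
    (tendsto_atTop_add_const_right l (-1) hu)
  have h_bdd : (u - v) =O[l] fun _ => (1 : ℝ) := IsBigO.of_bound 1 <| by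
    filter_upwards [hvu, huv] with x h₁ h₂
    simp only [Pi.sub_apply, Real.norm_eq_abs, norm_one, mul_one, abs_le]
    constructor <;> linarith
  have h_equiv : u ~[l] v :=
    h_bdd.trans_isLittleO ((isLittleO_one_left_iff ℝ).2 (tendsto_norm_atTop_atTop.comp hv))
  exact (isEquivalent_iff_tendsto_one (hv.eventually_ne_atTop 0)).1 h_equiv

namespace ProbabilityTheory

variable {Ω : Type*} [MeasurableSpace Ω] {μ : Measure Ω} {X : Ω → ℝ} {lam : ℝ}

theorem integrable_exp_mul_max_zero [IsFiniteMeasure μ] (hX : AEMeasurable X μ)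
    (hint : Integrable (fun ω => exp (lam * X ω)) μ) :
    Integrable (fun ω => exp (lam * max (X ω) 0)) μ :=
  (hint.add (integrable_const 1)).mono' (by fun_prop) <| Eventually.of_forall fun ω => by
    simpa [abs_of_pos (exp_pos _)] using exp_mul_max_zero_le_exp_mul_add_one lam (X ω)

theorem mgf_le_mgf_max_zero [IsFiniteMeasure μ] (hX : AEMeasurable X μ) (hlam : 0 ≤ lam)
    (hint : Integrable (fun ω => exp (lam * X ω)) μ) :
    mgf X μ lam ≤ mgf (fun ω => max (X ω) 0) μ lam :=
  integral_mono hint (integrable_exp_mul_max_zero hX hint)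
    fun ω => exp_mul_le_exp_mul_max_zero hlam (X ω)

theorem mgf_max_zero_le_mgf_add_one [IsProbabilityMeasure μ] (hX : AEMeasurable X μ)
    (hint : Integrable (fun ω => exp (lam * X ω)) μ) :
    mgf (fun ω => max (X ω) 0) μ lam ≤ mgf X μ lam + 1 := by
  calc mgf (fun ω => max (X ω) 0) μ lam ≤ ∫ ω, (exp (lam * X ω) + 1) ∂μ :=
        integral_mono (integrable_exp_mul_max_zero hX hint) (hint.add (integrable_const 1))
          fun ω => exp_mul_max_zero_le_exp_mul_add_one lam (X ω)
    _ = mgf X μ lam + 1 := by simp [integral_add hint (integrable_const 1), mgf]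

theorem mgf_max_zero_sub_one_eq_mul_integral_tail [IsProbabilityMeasure μ]
    (hX : AEMeasurable X μ) (hlam : 0 ≤ lam) (hint : Integrable (fun ω => exp (lam * X ω)) μ) :
    mgf (fun ω => max (X ω) 0) μ lam - 1 =
      lam * ∫ t in Ioi 0, exp (lam * t) * μ.real {ω | t < X ω} := by
  have h_int := integrable_exp_mul_max_zero hX hint
  calc mgf (fun ω => max (X ω) 0) μ lam - 1 = ∫ ω, (exp (lam * max (X ω) 0) - 1) ∂μ := by
        simp [integral_sub h_int (integrable_const 1), mgf]
    _ = lam * ∫ t in Ioi 0, exp (lam * t) * μ.real {ω | t < max (X ω) 0} :=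
        integral_exp_mul_sub_one_eq_mul_integral_tail
          (Eventually.of_forall fun ω => le_max_right _ _) (by fun_prop) hlam h_int
    _ = lam * ∫ t in Ioi 0, exp (lam * t) * μ.real {ω | t < X ω} := by
        congr 1
        refine setIntegral_congr_fun measurableSet_Ioi fun t (ht : 0 < t) => ?_
        simp only [lt_max_iff, ht.not_gt, or_false]

theorem exists_pos_measure_setOf_le_pos (hpos : 0 < μ {ω | 0 < X ω}) :
    ∃ ε > 0, 0 < μ {ω | ε ≤ X ω} := by
  by_contra! h_null
  have h_cover : {ω | 0 < X ω} ⊆ ⋃ n : ℕ, {ω | 1 / (n + 1 : ℝ) ≤ X ω} := fun ω (hω : 0 < X ω) =>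
    mem_iUnion.2 ((exists_nat_one_div_lt hω).imp fun _ h => h.le)
  exact hpos.ne' <| measure_mono_null h_cover <| measure_iUnion_null fun n =>
    nonpos_iff_eq_zero.1 (h_null _ (by positivity))

theorem tendsto_mgf_atTop [IsFiniteMeasure μ]
    (hint : ∀ t, 0 < t → Integrable (fun ω => exp (t * X ω)) μ)
    (hpos : 0 < μ {ω | 0 < X ω}) :
    Tendsto (mgf X μ) atTop atTop := by
  obtain ⟨ε, hε, hε_pos⟩ := exists_pos_measure_setOf_le_pos hpos
  have h_mass : 0 < μ.real {ω | ε ≤ X ω} := ENNReal.toReal_pos hε_pos.ne' (measure_ne_top _ _)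
  have h_exp : Tendsto (fun t => exp (t * ε) * μ.real {ω | ε ≤ X ω}) atTop atTop :=
    (tendsto_exp_atTop.comp (tendsto_id.atTop_mul_const hε)).atTop_mul_const h_mass
  refine tendsto_atTop_mono' atTop ?_ h_exp
  filter_upwards [eventually_gt_atTop 0] with t ht
  have := measure_ge_le_exp_mul_mgf ε ht.le (hint t ht)
  rwa [neg_mul, exp_neg, inv_mul_eq_div, le_div_iff₀' (exp_pos _)] at this

end ProbabilityTheory

/-- If `M` is a real random variable with `E[e^{λM}] < ∞` for all `λ > 0` and `P(M > 0) > 0`,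
then `E[e^{λM}] ∼ λ ∫_0^∞ e^{λz} P(M > z) dz` as `λ → ∞`. -/
theorem mgf_asymptotic_tail_integral
    {Ω : Type*} [MeasurableSpace Ω] (P : Measure Ω) [IsProbabilityMeasure P]
    (M : Ω → ℝ) (hM : Measurable M)
    (h_int : ∀ lam : ℝ, 0 < lam → Integrable (fun ω => Real.exp (lam * M ω)) P)
    (h_pos : 0 < P {ω | 0 < M ω}) :
    Tendsto
      (fun lam : ℝ =>
        (∫ ω, Real.exp (lam * M ω) ∂P) /
          (lam * ∫ z in Set.Ioi (0 : ℝ), Real.exp (lam * z) * (P {ω | z < M ω}).toReal))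
      atTop (nhds 1) := by
  have h_tail : ∀ lam > 0, lam * ∫ z in Ioi 0, exp (lam * z) * (P {ω | z < M ω}).toReal =
      mgf (fun ω => max (M ω) 0) P lam - 1 := fun lam hlam =>
    (mgf_max_zero_sub_one_eq_mul_integral_tail hM.aemeasurable hlam.le (h_int lam hlam)).symm
  refine tendsto_div_of_le_of_le_add_one (tendsto_mgf_atTop h_int h_pos) ?_ ?_
  all_goals filter_upwards [eventually_gt_atTop 0] with lam hlam
  · rw [h_tail lam hlam]
    exact sub_le_iff_le_add.2 (mgf_max_zero_le_mgf_add_one hM.aemeasurable (h_int lam hlam))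
  · rw [h_tail lam hlam, sub_add_cancel]
    exact mgf_le_mgf_max_zero hM.aemeasurable hlam.le (h_int lam hlam)
end

section
/- Let φ ∈ Φ with φ finite on all of ℝ, and define ψ(r) = r/φ^{−1}(r) for r ≥ 2, where φ^{−1} is the inverse of φ on [0,∞). Then there exist constants C₁ = C₁(φ), C₂ = C₂(φ) ∈ (0,∞) such that for every centered random variable ζ: ||ζ||G(ψ) ≤ C₁ ||ζ||B(φ) and ||ζ||B(φ) ≤ C₂ ||ζ||G(ψ). In particular, the spaces B(φ) and G(ψ) coincide as sets of centered random variables and their norms are equivalent. -/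
open MeasureTheory Filter Real ENNReal

/-- The class `Φ`: even, strictly convex, continuous functions `φ : ℝ → [0,∞)` vanishing
exactly at `0`, comparable to `λ²` near the origin and superlinear at infinity. -/
def IsPhiClass (φ : ℝ → ℝ) : Prop :=
  (∀ x : ℝ, φ (-x) = φ x) ∧
  StrictConvexOn ℝ Set.univ φ ∧
  Continuous φ ∧
  (∀ x : ℝ, 0 ≤ φ x) ∧
  (∀ x : ℝ, φ x = 0 ↔ x = 0) ∧
  (∃ Cm Cp : ℝ, 0 < Cm ∧ Cm ≤ Cp ∧
    ∀ x : ℝ, |x| ≤ 1 → Cm * x ^ 2 ≤ φ x ∧ φ x ≤ Cp * x ^ 2) ∧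
  Tendsto (fun x : ℝ => φ x / x) atTop atTop

/-- The `B(φ)`-norm: `inf {τ > 0 : ∀ λ, E exp(λζ) ≤ exp(φ(τλ))}` (`∞` if no such `τ`). -/
noncomputable def BNorm {Ω : Type*} [MeasurableSpace Ω] (P : Measure Ω)
    (φ : ℝ → ℝ) (ζ : Ω → ℝ) : ℝ≥0∞ :=
  sInf {t : ℝ≥0∞ | 0 < t ∧ t ≠ ⊤ ∧ ∀ l : ℝ,
    ∫⁻ ω, ENNReal.ofReal (Real.exp (l * ζ ω)) ∂P ≤
      ENNReal.ofReal (Real.exp (φ (t.toReal * l)))}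

/-- The Grand Lebesgue (moment) norm: `sup_{r ≥ 2} (E|ζ|^r)^{1/r} / ψ(r)`. -/
noncomputable def GNorm {Ω : Type*} [MeasurableSpace Ω] (P : Measure Ω)
    (ψ : ℝ → ℝ) (ζ : Ω → ℝ) : ℝ≥0∞ :=
  ⨆ r : {r : ℝ // 2 ≤ r},
    (∫⁻ ω, ENNReal.ofReal (|ζ ω| ^ (r : ℝ)) ∂P) ^ (1 / (r : ℝ)) /
      ENNReal.ofReal (ψ (r : ℝ))


/-!
For `G(ψ) ≤ 2 B(φ)`: the elementary bound `|x| ^ r ≤ (r / (e λ)) ^ r (e ^ {λx} + e ^ {-λx})`,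
taken at `λ = φ⁻¹(r) / τ`, turns `E exp(λζ) ≤ exp(φ(τλ)) = e ^ r` into `E|ζ| ^ r ≤ 2 (τ ψ(r)) ^ r`.

For `B(φ) ≤ C G(ψ)`: centering gives `E exp(λζ) ≤ 1 + ∑_{j ≥ 2} |λ| ^ j E|ζ| ^ j / j!`, and with
`E|ζ| ^ j ≤ (g ψ(j)) ^ j` and `j! ≥ (j / e) ^ j` this is at most `1 + ∑_{j ≥ 2} (a / φ⁻¹(j)) ^ j`,
`a = e g |λ|`. For small `a` the series is `O(a²)`, which the quadratic lower bound on `φ` absorbs;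
for every `a` it is at most `exp(φ(2a)) / 2`, since `(2a / φ⁻¹(j)) ^ j ≤ exp(φ(2a))` by convexity.
-/

section ConvexFromZero

variable {f : ℝ → ℝ}

theorem ConvexOn.le_div_mul_of_map_zero (hf : ConvexOn ℝ (Set.Ici 0) f) (h0 : f 0 = 0)
    {x y : ℝ} (hx : 0 ≤ x) (hxy : x ≤ y) : f x ≤ x / y * f y := by
  rcases (hx.trans hxy).eq_or_lt with hy | hy
  · obtain rfl : x = 0 := le_antisymm (hy ▸ hxy) hx
    simp [h0]
  have key := hf.2 (Set.mem_Ici.2 hy.le) Set.self_mem_Ici (div_nonneg hx hy.le)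
    (sub_nonneg.2 (div_le_one_of_le₀ hxy hy.le)) (add_sub_cancel _ _)
  simpa [h0, div_mul_cancel₀ x hy.ne'] using key

theorem ConvexOn.mul_le_of_map_zero (hf : ConvexOn ℝ (Set.Ici 0) f) (h0 : f 0 = 0)
    {c x : ℝ} (hc : 1 ≤ c) (hx : 0 ≤ x) : c * f x ≤ f (c * x) := by
  rcases hx.eq_or_lt with rfl | hx
  · simp [h0]
  have hc0 : 0 < c := one_pos.trans_le hc
  have h := hf.le_div_mul_of_map_zero h0 hx.le (le_mul_of_one_le_left hx.le hc)
  rw [div_mul_cancel_right₀ hx.ne', ← div_eq_inv_mul, le_div_iff₀ hc0] at h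
  linarith

theorem ConvexOn.monotoneOn_of_map_zero (hf : ConvexOn ℝ (Set.Ici 0) f) (h0 : f 0 = 0)
    (hnonneg : ∀ x, 0 ≤ x → 0 ≤ f x) : MonotoneOn f (Set.Ici 0) := by
  intro x hx y _ hxy
  calc f x ≤ x / y * f y := hf.le_div_mul_of_map_zero h0 hx hxy
    _ ≤ 1 * f y := by
      gcongr
      · exact hnonneg y (le_trans hx hxy)
      · exact div_le_one_of_le₀ hxy (le_trans hx hxy)
    _ = f y := one_mul _

end ConvexFromZero

theorem MonotoneOn.monotoneOn_of_rightInvOn {f g : ℝ → ℝ} (hf : MonotoneOn f (Set.Ici 0))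
    (hg : ∀ y, 0 ≤ y → 0 ≤ g y ∧ f (g y) = y) : MonotoneOn g (Set.Ici 0) := by
  intro y₁ h₁ y₂ h₂ h12
  by_contra! hlt
  have hle : y₂ ≤ y₁ := by
    simpa only [(hg y₁ h₁).2, (hg y₂ h₂).2] using hf (hg y₂ h₂).1 (hg y₁ h₁).1 hlt.le
  exact hlt.ne (by rw [le_antisymm h12 hle])

theorem rpow_le_div_exp_one_rpow_mul_exp {x r : ℝ} (hx : 0 ≤ x) (hr : 0 < r) :
    x ^ r ≤ (r / exp 1) ^ r * exp x := by
  rcases hx.eq_or_lt with rfl | hx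
  · rw [zero_rpow hr.ne']
    positivity
  rw [rpow_def_of_pos hx, rpow_def_of_pos (by positivity), ← exp_add, exp_le_exp,
    log_div hr.ne' (exp_pos 1).ne', log_exp]
  have h : log (x / r) ≤ x / r - 1 := log_le_sub_one_of_pos (by positivity)
  rw [log_div hx.ne' hr.ne'] at h
  have h' := mul_le_mul_of_nonneg_left h hr.le
  rw [mul_sub, mul_sub, mul_div_cancel₀ x hr.ne'] at h'
  linarith

theorem exp_le_one_add_add_exp_abs_sub (x : ℝ) : exp x ≤ 1 + x + (exp |x| - 1 - |x|) := by
  rcases le_or_gt 0 x with h | h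
  · rw [abs_of_nonneg h]
    linarith
  · rw [abs_of_neg h]
    have hs := sinh_lt_self_iff.2 h
    rw [sinh_eq] at hs
    linarith

theorem exp_sub_one_sub_eq_tsum (y : ℝ) :
    exp y - 1 - y = ∑' k : ℕ, y ^ (k + 2) / (k + 2).factorial := by
  rw [exp_eq_exp_ℝ, NormedSpace.exp_eq_tsum_div]
  dsimp only
  rw [← (summable_pow_div_factorial y).sum_add_tsum_nat_add 2]
  simp [Finset.sum_range_succ]
  ring

theorem div_pow_le_exp_of_map_eq {f : ℝ → ℝ} (hf : ConvexOn ℝ (Set.Ici 0) f) (h0 : f 0 = 0)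
    (hnonneg : ∀ x, 0 ≤ x → 0 ≤ f x) {x I : ℝ} {j : ℕ} (hx : 0 ≤ x) (hI : 0 < I)
    (hfI : f I = j) : (x / I) ^ j ≤ exp (f x) := by
  rcases le_or_gt x I with h | h
  · calc (x / I) ^ j ≤ 1 := pow_le_one₀ (by positivity) (div_le_one_of_le₀ h hI.le)
      _ ≤ exp (f x) := one_le_exp (hnonneg x hx)
  have hx0 : 0 < x := hI.trans h
  rw [← exp_log (by positivity : 0 < (x / I) ^ j), exp_le_exp, Real.log_pow]
  have hfI' : (j : ℝ) ≤ I / x * f x := hfI ▸ hf.le_div_mul_of_map_zero h0 hI.le h.le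
  have hlog : log (x / I) ≤ x / I := log_le_self (by positivity)
  calc (j : ℝ) * log (x / I) ≤ I / x * f x * (x / I) :=
        mul_le_mul hfI' hlog (log_nonneg ((one_le_div hI).2 h.le)) (by positivity [hnonneg x hx])
    _ = f x := by field_simp

theorem tsum_ofReal_le_of_le_mul_pow {x : ℕ → ℝ} {c q : ℝ} (hq0 : 0 ≤ q) (hq : q ≤ 1 / 2)
    (h : ∀ k, x k ≤ c * q ^ (k + 2)) :
    ∑' k, ENNReal.ofReal (x k) ≤ ENNReal.ofReal (2 * c * q ^ 2) := by
  have hinv : (1 - ENNReal.ofReal q)⁻¹ ≤ 2 := by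
    have hq' : ENNReal.ofReal q ≤ 2⁻¹ := by
      rw [← ENNReal.ofReal_ofNat 2, ← ENNReal.ofReal_inv_of_pos two_pos]
      exact ENNReal.ofReal_le_ofReal (by linarith)
    rw [ENNReal.inv_le_iff_inv_le, ← ENNReal.one_sub_inv_two]
    exact tsub_le_tsub_left hq' 1
  calc ∑' k, ENNReal.ofReal (x k)
      ≤ ∑' k : ℕ, ENNReal.ofReal (c * q ^ 2) * ENNReal.ofReal q ^ k := by
        refine ENNReal.tsum_le_tsum fun k => ?_
        rw [← ENNReal.ofReal_pow hq0, ← ENNReal.ofReal_mul' (by positivity), mul_assoc,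
          ← pow_add, add_comm 2 k]
        exact ENNReal.ofReal_le_ofReal (h k)
    _ = ENNReal.ofReal (c * q ^ 2) * (1 - ENNReal.ofReal q)⁻¹ := by
        rw [ENNReal.tsum_mul_left, ENNReal.tsum_geometric]
    _ ≤ ENNReal.ofReal (c * q ^ 2) * 2 := by gcongr
    _ = ENNReal.ofReal (2 * c * q ^ 2) := by
        rw [← ENNReal.ofReal_ofNat 2, ← ENNReal.ofReal_mul' zero_le_two]
        ring_nf

/-- With `g = φ⁻¹` and `a = e ‖ζ‖_{G(ψ)} |λ|`, this series bounds `E exp(λζ) - 1` for centered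
`ζ`. -/
noncomputable def invPowSeries (g : ℝ → ℝ) (a : ℝ) : ℝ≥0∞ :=
  ∑' k : ℕ, ENNReal.ofReal ((a / g (k + 2 : ℕ)) ^ (k + 2))

section InvPowSeries

variable {φ g : ℝ → ℝ}

theorem pos_of_rightInvOn (h0 : φ 0 = 0) (hg : ∀ y, 0 ≤ y → 0 ≤ g y ∧ φ (g y) = y)
    {y : ℝ} (hy : 0 < y) : 0 < g y := by
  refine (hg y hy.le).1.lt_of_ne fun h => hy.ne ?_
  rw [← (hg y hy.le).2, ← h, h0]

theorem invPowSeries_le_exp_div_two (hf : ConvexOn ℝ (Set.Ici 0) φ) (h0 : φ 0 = 0)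
    (hnonneg : ∀ x, 0 ≤ x → 0 ≤ φ x) (hg : ∀ y, 0 ≤ y → 0 ≤ g y ∧ φ (g y) = y)
    {a : ℝ} (ha : 0 ≤ a) : invPowSeries g a ≤ ENNReal.ofReal (exp (φ (2 * a)) / 2) := by
  have key : ∀ k : ℕ, (a / g (k + 2 : ℕ)) ^ (k + 2) ≤ exp (φ (2 * a)) * (1 / 2) ^ (k + 2) := by
    intro k
    have hI := pos_of_rightInvOn h0 hg (by positivity : (0 : ℝ) < (k + 2 : ℕ))
    calc (a / g (k + 2 : ℕ)) ^ (k + 2) = (2 * a / g (k + 2 : ℕ)) ^ (k + 2) * (1 / 2) ^ (k + 2) := by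
          rw [← mul_pow]; ring_nf
      _ ≤ exp (φ (2 * a)) * (1 / 2) ^ (k + 2) := by
          gcongr
          exact div_pow_le_exp_of_map_eq hf h0 hnonneg (by positivity) hI (hg _ (by positivity)).2
  refine (tsum_ofReal_le_of_le_mul_pow (by norm_num) le_rfl key).trans_eq ?_
  ring_nf

theorem invPowSeries_le_two_mul_sq (hf : MonotoneOn φ (Set.Ici 0)) (h0 : φ 0 = 0)
    (hg : ∀ y, 0 ≤ y → 0 ≤ g y ∧ φ (g y) = y) {a : ℝ} (ha : 0 ≤ a) (ha2 : a ≤ g 2 / 2) :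
    invPowSeries g a ≤ ENNReal.ofReal (2 * (a / g 2) ^ 2) := by
  have hb := pos_of_rightInvOn h0 hg two_pos
  have key : ∀ k : ℕ, (a / g (k + 2 : ℕ)) ^ (k + 2) ≤ 1 * (a / g 2) ^ (k + 2) := by
    intro k
    have hgmono := hf.monotoneOn_of_rightInvOn hg (Set.mem_Ici.2 zero_le_two)
      (Set.mem_Ici.2 (by positivity : (0 : ℝ) ≤ (k + 2 : ℕ))) (by push_cast; linarith)
    rw [one_mul]
    gcongr
    exact div_nonneg ha (hg _ (by positivity)).1
  refine (tsum_ofReal_le_of_le_mul_pow (by positivity) ?_ key).trans_eq (by ring_nf)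
  rw [div_le_iff₀ hb]
  linarith

theorem one_add_invPowSeries_le_of_quadratic_lower (hf : MonotoneOn φ (Set.Ici 0)) (h0 : φ 0 = 0)
    (hg : ∀ y, 0 ≤ y → 0 ≤ g y ∧ φ (g y) = y) {Cm : ℝ} (hCm : 0 < Cm)
    (hquad : ∀ x, 0 ≤ x → x ≤ 1 → Cm * x ^ 2 ≤ φ x) {a : ℝ} (ha : 0 ≤ a) (ha2 : a ≤ g 2 / 2)
    (ha1 : √(2 / Cm) / g 2 * a ≤ 1) :
    1 + invPowSeries g a ≤ ENNReal.ofReal (exp (φ (√(2 / Cm) / g 2 * a))) := by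
  have hb := pos_of_rightInvOn h0 hg two_pos
  have hsq : 2 * (a / g 2) ^ 2 = Cm * (√(2 / Cm) / g 2 * a) ^ 2 := by
    rw [mul_pow, div_pow, div_pow, sq_sqrt (by positivity)]
    field_simp
  calc 1 + invPowSeries g a ≤ 1 + ENNReal.ofReal (2 * (a / g 2) ^ 2) := by
        gcongr
        exact invPowSeries_le_two_mul_sq hf h0 hg ha ha2
    _ = ENNReal.ofReal (1 + 2 * (a / g 2) ^ 2) := by
        rw [ENNReal.ofReal_add zero_le_one (by positivity), ENNReal.ofReal_one]
    _ ≤ ENNReal.ofReal (exp (φ (√(2 / Cm) / g 2 * a))) := by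
        refine ENNReal.ofReal_le_ofReal ((add_comm _ _).trans_le (add_one_le_exp _) |>.trans ?_)
        exact exp_le_exp.2 (hsq ▸ hquad _ (by positivity) ha1)

theorem one_add_invPowSeries_le_of_le_apply (hf : ConvexOn ℝ (Set.Ici 0) φ) (h0 : φ 0 = 0)
    (hnonneg : ∀ x, 0 ≤ x → 0 ≤ φ x) (hg : ∀ y, 0 ≤ y → 0 ≤ g y ∧ φ (g y) = y)
    {p a : ℝ} (hp : 0 < p) (ha : 0 ≤ a) (hpa : p ≤ φ (2 * a)) :
    1 + invPowSeries g a ≤ ENNReal.ofReal (exp (φ ((1 + Real.log 2 / p) * (2 * a)))) := by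
  have hE : 1 ≤ exp (φ (2 * a)) := one_le_exp (hnonneg _ (by positivity))
  have hlog : φ (2 * a) + Real.log 2 ≤ (1 + Real.log 2 / p) * φ (2 * a) := by
    have : Real.log 2 ≤ Real.log 2 / p * φ (2 * a) := by
      rw [div_mul_eq_mul_div, le_div_iff₀ hp]
      exact mul_le_mul_of_nonneg_left hpa (log_nonneg one_le_two)
    linarith
  calc 1 + invPowSeries g a ≤ 1 + ENNReal.ofReal (exp (φ (2 * a)) / 2) := by
        gcongr
        exact invPowSeries_le_exp_div_two hf h0 hnonneg hg ha
    _ = ENNReal.ofReal (1 + exp (φ (2 * a)) / 2) := by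
        rw [ENNReal.ofReal_add zero_le_one (by positivity), ENNReal.ofReal_one]
    _ ≤ ENNReal.ofReal (exp (φ ((1 + Real.log 2 / p) * (2 * a)))) := by
        refine ENNReal.ofReal_le_ofReal ?_
        calc 1 + exp (φ (2 * a)) / 2 ≤ exp (φ (2 * a) + Real.log 2) := by
              rw [exp_add, exp_log two_pos]
              linarith
          _ ≤ exp (φ ((1 + Real.log 2 / p) * (2 * a))) :=
              exp_le_exp.2 (hlog.trans (hf.mul_le_of_map_zero h0
                (le_add_of_nonneg_right (by positivity)) (by positivity)))

/-- Below the threshold `a₁` the quadratic lower bound on `φ` absorbs `2 (a / g 2) ^ 2`; above it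
`φ (2 a) ≥ p`, so superhomogeneity gains the missing factor `2` in `exp (φ (2 a)) / 2 + 1`. -/
theorem exists_one_add_invPowSeries_le (hf : ConvexOn ℝ (Set.Ici 0) φ) (h0 : φ 0 = 0)
    (hpos : ∀ x, 0 < x → 0 < φ x) (hg : ∀ y, 0 ≤ y → 0 ≤ g y ∧ φ (g y) = y) {Cm : ℝ}
    (hCm : 0 < Cm) (hquad : ∀ x, 0 ≤ x → x ≤ 1 → Cm * x ^ 2 ≤ φ x) :
    ∃ C > 0, ∀ a, 0 ≤ a → 1 + invPowSeries g a ≤ ENNReal.ofReal (exp (φ (C * a))) := by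
  have hnonneg : ∀ x, 0 ≤ x → 0 ≤ φ x := fun x hx =>
    hx.eq_or_lt.elim (fun h => h ▸ h0.ge) (fun h => (hpos x h).le)
  have hmono := hf.monotoneOn_of_map_zero h0 hnonneg
  have hb := pos_of_rightInvOn h0 hg two_pos
  set Cs := √(2 / Cm) / g 2
  have hCs : 0 < Cs := by positivity
  set a₁ := min (g 2 / 2) (1 / Cs)
  have ha₁ : 0 < a₁ := lt_min (by positivity) (by positivity)
  set p := φ (2 * a₁)
  have hp : 0 < p := hpos _ (by positivity)
  set K := 1 + Real.log 2 / p
  refine ⟨max Cs (K * 2), hCs.trans_le (le_max_left _ _), fun a ha => ?_⟩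
  have hmono_exp : ∀ {x y : ℝ}, 0 ≤ x → x ≤ y →
      ENNReal.ofReal (exp (φ x)) ≤ ENNReal.ofReal (exp (φ y)) := fun hx hxy =>
    ENNReal.ofReal_le_ofReal (exp_le_exp.2 (hmono hx (hx.trans hxy) hxy))
  rcases le_or_gt a a₁ with hsmall | hlarge
  · refine (one_add_invPowSeries_le_of_quadratic_lower hmono h0 hg hCm hquad ha
      (hsmall.trans (min_le_left _ _)) ?_).trans (hmono_exp (by positivity) ?_)
    · rw [← le_div_iff₀' hCs]
      exact hsmall.trans (min_le_right _ _)
    · gcongr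
      exact le_max_left _ _
  · have hpa : p ≤ φ (2 * a) :=
      hmono (Set.mem_Ici.2 (by positivity)) (Set.mem_Ici.2 (by positivity)) (by linarith)
    refine (one_add_invPowSeries_le_of_le_apply hf h0 hnonneg hg hp ha hpa).trans
      (hmono_exp (by positivity) ?_)
    rw [← mul_assoc]
    gcongr
    exact le_max_right _ _

end InvPowSeries

theorem abs_rpow_le_mul_exp_add_exp (x : ℝ) {r l : ℝ} (hr : 0 < r) (hl : 0 < l) :
    |x| ^ r ≤ (r / (exp 1 * l)) ^ r * (exp (l * x) + exp (-l * x)) := by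
  have hlr : 0 < l ^ r := rpow_pos_of_pos hl r
  calc |x| ^ r = |l * x| ^ r / l ^ r := by
        rw [abs_mul, abs_of_pos hl, mul_rpow hl.le (abs_nonneg x), mul_div_cancel_left₀ _ hlr.ne']
    _ ≤ (r / exp 1) ^ r * exp |l * x| / l ^ r := by
        gcongr
        exact rpow_le_div_exp_one_rpow_mul_exp (abs_nonneg _) hr
    _ = (r / (exp 1 * l)) ^ r * exp |l * x| := by
        rw [← div_div, div_rpow (by positivity) hl.le]
        ring
    _ ≤ (r / (exp 1 * l)) ^ r * (exp (l * x) + exp (-l * x)) := by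
        rw [neg_mul]
        gcongr
        exact exp_abs_le _

def MGFBoundedBy {Ω : Type*} [MeasurableSpace Ω] (P : Measure Ω) (φ : ℝ → ℝ)
    (ζ : Ω → ℝ) (τ : ℝ) : Prop :=
  ∀ l : ℝ, ∫⁻ ω, ENNReal.ofReal (exp (l * ζ ω)) ∂P ≤ ENNReal.ofReal (exp (φ (τ * l)))

section Norms

variable {Ω : Type*} [MeasurableSpace Ω] {P : Measure Ω} {φ ψ : ℝ → ℝ} {ζ : Ω → ℝ}

theorem BNorm_le_ofReal {τ : ℝ} (hτ : 0 < τ) (h : MGFBoundedBy P φ ζ τ) :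
    BNorm P φ ζ ≤ ENNReal.ofReal τ :=
  sInf_le ⟨ENNReal.ofReal_pos.2 hτ, ENNReal.ofReal_ne_top, by rwa [ENNReal.toReal_ofReal hτ.le]⟩

theorem le_mul_BNorm {X c : ℝ≥0∞} (hc0 : c ≠ 0) (hc : c ≠ ⊤)
    (h : ∀ τ, 0 < τ → MGFBoundedBy P φ ζ τ → X ≤ c * ENNReal.ofReal τ) :
    X ≤ c * BNorm P φ ζ := by
  calc X = c * (X / c) := (ENNReal.mul_div_cancel hc0 hc).symm
    _ ≤ c * BNorm P φ ζ := by
        gcongr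
        refine le_sInf fun t ⟨ht0, htop, ht⟩ => ENNReal.div_le_of_le_mul' ?_
        simpa only [ENNReal.ofReal_toReal htop] using
          h t.toReal (ENNReal.toReal_pos ht0.ne' htop) ht

theorem lintegral_rpow_le_GNorm {r : ℝ} (hr : 2 ≤ r) (hψ : 0 < ψ r) :
    ∫⁻ ω, ENNReal.ofReal (|ζ ω| ^ r) ∂P ≤ (GNorm P ψ ζ * ENNReal.ofReal (ψ r)) ^ r := by
  have h : (∫⁻ ω, ENNReal.ofReal (|ζ ω| ^ r) ∂P) ^ (1 / r) / ENNReal.ofReal (ψ r) ≤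
      GNorm P ψ ζ :=
    le_iSup (fun r : {r : ℝ // 2 ≤ r} => (∫⁻ ω, ENNReal.ofReal (|ζ ω| ^ (r : ℝ)) ∂P) ^
      (1 / (r : ℝ)) / ENNReal.ofReal (ψ r)) ⟨r, hr⟩
  rw [ENNReal.div_le_iff_le_mul (Or.inl (ENNReal.ofReal_pos.2 hψ).ne')
    (Or.inl ENNReal.ofReal_ne_top)] at h
  calc ∫⁻ ω, ENNReal.ofReal (|ζ ω| ^ r) ∂P
      = ((∫⁻ ω, ENNReal.ofReal (|ζ ω| ^ r) ∂P) ^ (1 / r)) ^ r := by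
        rw [← ENNReal.rpow_mul, one_div_mul_cancel (by linarith), ENNReal.rpow_one]
    _ ≤ (GNorm P ψ ζ * ENNReal.ofReal (ψ r)) ^ r := by gcongr

theorem GNorm_le {M : ℝ≥0∞}
    (h : ∀ r, 2 ≤ r → ∫⁻ ω, ENNReal.ofReal (|ζ ω| ^ r) ∂P ≤ (M * ENNReal.ofReal (ψ r)) ^ r) :
    GNorm P ψ ζ ≤ M := by
  refine iSup_le fun ⟨r, hr⟩ => ENNReal.div_le_of_le_mul ?_
  calc (∫⁻ ω, ENNReal.ofReal (|ζ ω| ^ r) ∂P) ^ (1 / r)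
      ≤ ((M * ENNReal.ofReal (ψ r)) ^ r) ^ (1 / r) := by gcongr; exact h r hr
    _ = M * ENNReal.ofReal (ψ r) := by
        rw [← ENNReal.rpow_mul, mul_one_div_cancel (by linarith), ENNReal.rpow_one]

theorem lintegral_abs_rpow_le (hζ : Measurable ζ) {r l : ℝ} (hr : 0 < r) (hl : 0 < l) :
    ∫⁻ ω, ENNReal.ofReal (|ζ ω| ^ r) ∂P ≤ ENNReal.ofReal ((r / (exp 1 * l)) ^ r) *
      (∫⁻ ω, ENNReal.ofReal (exp (l * ζ ω)) ∂P + ∫⁻ ω, ENNReal.ofReal (exp (-l * ζ ω)) ∂P) := by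
  rw [← lintegral_add_left (hζ.const_mul l).exp.ennreal_ofReal,
    ← lintegral_const_mul' _ _ ENNReal.ofReal_ne_top]
  refine lintegral_mono fun ω => ?_
  rw [← ENNReal.ofReal_add (exp_nonneg _) (exp_nonneg _), ← ENNReal.ofReal_mul (by positivity)]
  exact ENNReal.ofReal_le_ofReal (abs_rpow_le_mul_exp_add_exp _ hr hl)

/-- Test the bound at `l = I / τ`, where `φ (τ l) = φ I = r`. -/
theorem lintegral_abs_rpow_le_of_MGFBoundedBy (heven : ∀ x, φ (-x) = φ x) (hζ : Measurable ζ)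
    {τ r I : ℝ} (hτ : 0 < τ) (hB : MGFBoundedBy P φ ζ τ) (hr : 1 ≤ r) (hI : 0 < I)
    (hφI : φ I = r) :
    ∫⁻ ω, ENNReal.ofReal (|ζ ω| ^ r) ∂P ≤
      (ENNReal.ofReal (2 * τ) * ENNReal.ofReal (r / I)) ^ r := by
  have hr0 : 0 < r := one_pos.trans_le hr
  have hl : 0 < I / τ := by positivity
  have hexp : ∀ l, τ * l = I ∨ τ * l = -I → ∫⁻ ω, ENNReal.ofReal (exp (l * ζ ω)) ∂P ≤
      ENNReal.ofReal (exp r) := by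
    rintro l (h | h) <;> simpa only [h, heven, hφI] using hB l
  calc ∫⁻ ω, ENNReal.ofReal (|ζ ω| ^ r) ∂P
      ≤ ENNReal.ofReal ((r / (exp 1 * (I / τ))) ^ r) *
          (ENNReal.ofReal (exp r) + ENNReal.ofReal (exp r)) := by
        refine (lintegral_abs_rpow_le hζ hr0 hl).trans ?_
        gcongr
        · exact hexp _ (Or.inl (by field_simp))
        · exact hexp _ (Or.inr (by field_simp))
    _ = ENNReal.ofReal (2 * (τ * r / I) ^ r) := by
        have hbase : (r / (exp 1 * (I / τ))) ^ r = (τ * r / I) ^ r / exp r := by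
          rw [show r / (exp 1 * (I / τ)) = τ * r / I / exp 1 by field_simp,
            div_rpow (by positivity) (exp_pos 1).le, exp_one_rpow]
        rw [← ENNReal.ofReal_add (exp_nonneg _) (exp_nonneg _),
          ← ENNReal.ofReal_mul (by positivity), hbase]
        congr 1
        field_simp
        ring
    _ ≤ ENNReal.ofReal ((2 * (τ * r / I)) ^ r) := by
        rw [mul_rpow zero_le_two (by positivity)]
        gcongr
        simpa using Real.rpow_le_rpow_of_exponent_le one_le_two hr
    _ = (ENNReal.ofReal (2 * τ) * ENNReal.ofReal (r / I)) ^ r := by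
        rw [← ENNReal.ofReal_mul (by positivity), ENNReal.ofReal_rpow_of_nonneg (by positivity)
          hr0.le]
        ring_nf

theorem GNorm_le_two_mul_BNorm (heven : ∀ x, φ (-x) = φ x) {g : ℝ → ℝ} (h0 : φ 0 = 0)
    (hg : ∀ y, 0 ≤ y → 0 ≤ g y ∧ φ (g y) = y) (hψ : ∀ r, 2 ≤ r → ψ r = r / g r)
    (hζ : Measurable ζ) : GNorm P ψ ζ ≤ ENNReal.ofReal 2 * BNorm P φ ζ := by
  refine le_mul_BNorm (by simp) ENNReal.ofReal_ne_top fun τ hτ hB => ?_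
  rw [← ENNReal.ofReal_mul zero_le_two]
  refine GNorm_le fun r hr => ?_
  rw [hψ r hr]
  exact lintegral_abs_rpow_le_of_MGFBoundedBy heven hζ hτ hB (by linarith)
    (pos_of_rightInvOn h0 hg (by linarith)) (hg r (by linarith)).2

theorem lintegral_exp_le_one_add [IsProbabilityMeasure P] (hζm : Measurable ζ)
    (hζ : Integrable ζ P) (hmean : ∫ ω, ζ ω ∂P = 0) (l : ℝ) :
    ∫⁻ ω, ENNReal.ofReal (exp (l * ζ ω)) ∂P ≤
      1 + ∫⁻ ω, ENNReal.ofReal (exp |l * ζ ω| - 1 - |l * ζ ω|) ∂P := by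
  set D := fun ω => exp |l * ζ ω| - 1 - |l * ζ ω|
  by_cases hD : ∫⁻ ω, ENNReal.ofReal (D ω) ∂P = ⊤
  · rw [hD, add_top]
    exact le_top
  have hDnn : ∀ ω, 0 ≤ D ω := fun ω => by
    linarith [add_one_le_exp |l * ζ ω|]
  have hDint : Integrable D P :=
    ⟨(((hζm.const_mul l).abs.exp.sub_const 1).sub (hζm.const_mul l).abs).aestronglyMeasurable,
      (hasFiniteIntegral_iff_ofReal (ae_of_all _ hDnn)).2 (lt_top_iff_ne_top.2 hD)⟩
  have hlin : Integrable (fun ω => 1 + l * ζ ω) P := (integrable_const 1).add (hζ.const_mul l)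
  have hdom : Integrable (fun ω => 1 + l * ζ ω + D ω) P := hlin.add hDint
  have hle : ∀ ω, exp (l * ζ ω) ≤ 1 + l * ζ ω + D ω := fun ω =>
    exp_le_one_add_add_exp_abs_sub _
  have hexp : Integrable (fun ω => exp (l * ζ ω)) P :=
    hdom.mono' (hζm.const_mul l).exp.aestronglyMeasurable
      (ae_of_all _ fun ω => by rw [norm_of_nonneg (exp_nonneg _)]; exact hle ω)
  calc ∫⁻ ω, ENNReal.ofReal (exp (l * ζ ω)) ∂P
      = ENNReal.ofReal (∫ ω, exp (l * ζ ω) ∂P) :=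
        (ofReal_integral_eq_lintegral_ofReal hexp (ae_of_all _ fun _ => exp_nonneg _)).symm
    _ ≤ ENNReal.ofReal (∫ ω, (1 + l * ζ ω + D ω) ∂P) :=
        ENNReal.ofReal_le_ofReal (integral_mono hexp hdom hle)
    _ = ENNReal.ofReal (1 + ∫ ω, D ω ∂P) := by
        rw [integral_add hlin hDint,
          integral_add (integrable_const 1) (hζ.const_mul l), integral_const_mul, hmean]
        simp
    _ = 1 + ∫⁻ ω, ENNReal.ofReal (D ω) ∂P := by
        rw [ENNReal.ofReal_add zero_le_one (integral_nonneg hDnn), ENNReal.ofReal_one,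
          ofReal_integral_eq_lintegral_ofReal hDint (ae_of_all _ hDnn)]

theorem lintegral_exp_abs_sub_eq_tsum (hζ : Measurable ζ) :
    ∫⁻ ω, ENNReal.ofReal (exp |ζ ω| - 1 - |ζ ω|) ∂P =
      ∑' k : ℕ, ∫⁻ ω, ENNReal.ofReal (|ζ ω| ^ (k + 2) / (k + 2).factorial) ∂P := by
  rw [← lintegral_tsum fun k => ((hζ.abs.pow_const _).div_const _).ennreal_ofReal.aemeasurable]
  refine lintegral_congr fun ω => ?_
  have hsum : Summable fun k : ℕ => |ζ ω| ^ (k + 2) / (k + 2).factorial :=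
    (summable_pow_div_factorial _).comp_injective (add_left_injective 2)
  rw [exp_sub_one_sub_eq_tsum, ENNReal.ofReal_tsum_of_nonneg (fun k => by positivity) hsum]

/-- `j ^ j / j! ≤ e ^ j` absorbs the factorial. -/
theorem lintegral_pow_div_factorial_le {j : ℕ} {γ I : ℝ} (hγ : 0 ≤ γ) (hI : 0 < I)
    (hM : ∫⁻ ω, ENNReal.ofReal (|ζ ω| ^ (j : ℝ)) ∂P ≤
      (ENNReal.ofReal γ * ENNReal.ofReal (j / I)) ^ (j : ℝ)) (l : ℝ) :
    ∫⁻ ω, ENNReal.ofReal (|l * ζ ω| ^ j / j.factorial) ∂P ≤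
      ENNReal.ofReal ((exp 1 * γ * |l| / I) ^ j) := by
  have hfac : ((j : ℝ) ^ j / j.factorial) ≤ exp 1 ^ j := by
    simpa only [← exp_nat_mul, mul_one] using pow_div_factorial_le_exp (j : ℝ) (by positivity) j
  calc ∫⁻ ω, ENNReal.ofReal (|l * ζ ω| ^ j / j.factorial) ∂P
      = ENNReal.ofReal (|l| ^ j / j.factorial) *
          ∫⁻ ω, ENNReal.ofReal (|ζ ω| ^ (j : ℝ)) ∂P := by
        rw [← lintegral_const_mul' _ _ ENNReal.ofReal_ne_top]
        refine lintegral_congr fun ω => ?_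
        rw [← ENNReal.ofReal_mul (by positivity), Real.rpow_natCast, abs_mul, mul_pow]
        ring_nf
    _ ≤ ENNReal.ofReal (|l| ^ j / j.factorial) * ENNReal.ofReal ((γ * (j / I)) ^ j) := by
        rw [← ENNReal.ofReal_mul hγ, ENNReal.ofReal_rpow_of_nonneg (by positivity)
          (Nat.cast_nonneg j), Real.rpow_natCast] at hM
        gcongr
    _ ≤ ENNReal.ofReal ((exp 1 * γ * |l| / I) ^ j) := by
        rw [← ENNReal.ofReal_mul (by positivity)]
        refine ENNReal.ofReal_le_ofReal ?_
        calc |l| ^ j / j.factorial * (γ * (j / I)) ^ j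
            = (γ * |l| / I) ^ j * ((j : ℝ) ^ j / j.factorial) := by ring
          _ ≤ (γ * |l| / I) ^ j * exp 1 ^ j := by gcongr
          _ = (exp 1 * γ * |l| / I) ^ j := by ring

section Equivalence

variable {g : ℝ → ℝ} {C : ℝ} [IsProbabilityMeasure P]

theorem MGFBoundedBy_of_GNorm_le (heven : ∀ x, φ (-x) = φ x) (h0 : φ 0 = 0)
    (hg : ∀ y, 0 ≤ y → 0 ≤ g y ∧ φ (g y) = y) (hψ : ∀ r, 2 ≤ r → ψ r = r / g r)
    (hCg : ∀ a, 0 ≤ a → 1 + invPowSeries g a ≤ ENNReal.ofReal (exp (φ (C * a))))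
    (hζm : Measurable ζ) (hζ : Integrable ζ P) (hmean : ∫ ω, ζ ω ∂P = 0) {γ : ℝ} (hγ : 0 ≤ γ)
    (hG : GNorm P ψ ζ ≤ ENNReal.ofReal γ) : MGFBoundedBy P φ ζ (C * exp 1 * γ) := by
  intro l
  have hterm : ∀ k : ℕ, ∫⁻ ω, ENNReal.ofReal (|l * ζ ω| ^ (k + 2) / (k + 2).factorial) ∂P ≤
      ENNReal.ofReal ((exp 1 * γ * |l| / g (k + 2 : ℕ)) ^ (k + 2)) := by
    intro k
    have hr : (2 : ℝ) ≤ (k + 2 : ℕ) := by push_cast; linarith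
    have hI := pos_of_rightInvOn h0 hg (by linarith : (0 : ℝ) < (k + 2 : ℕ))
    refine lintegral_pow_div_factorial_le hγ hI ?_ l
    have hψpos : 0 < ψ (k + 2 : ℕ) := by rw [hψ _ hr]; exact div_pos (by linarith) hI
    rw [← hψ _ hr]
    exact (lintegral_rpow_le_GNorm hr hψpos).trans (by gcongr)
  have heven_abs : φ (C * (exp 1 * γ * |l|)) = φ (C * exp 1 * γ * l) := by
    rcases abs_cases l with ⟨h, -⟩ | ⟨h, -⟩
    · rw [h]; ring_nf
    · rw [h, ← heven]; ring_nf
  calc ∫⁻ ω, ENNReal.ofReal (exp (l * ζ ω)) ∂P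
      ≤ 1 + ∫⁻ ω, ENNReal.ofReal (exp |l * ζ ω| - 1 - |l * ζ ω|) ∂P :=
        lintegral_exp_le_one_add hζm hζ hmean l
    _ = 1 + ∑' k : ℕ, ∫⁻ ω, ENNReal.ofReal (|l * ζ ω| ^ (k + 2) / (k + 2).factorial) ∂P := by
        rw [lintegral_exp_abs_sub_eq_tsum (hζm.const_mul l)]
    _ ≤ 1 + invPowSeries g (exp 1 * γ * |l|) := by
        gcongr
        exact ENNReal.tsum_le_tsum hterm
    _ ≤ ENNReal.ofReal (exp (φ (C * exp 1 * γ * l))) :=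
        heven_abs ▸ hCg _ (by positivity)

theorem BNorm_le_mul_GNorm (heven : ∀ x, φ (-x) = φ x) (h0 : φ 0 = 0)
    (hg : ∀ y, 0 ≤ y → 0 ≤ g y ∧ φ (g y) = y) (hψ : ∀ r, 2 ≤ r → ψ r = r / g r)
    (hC : 0 < C) (hCg : ∀ a, 0 ≤ a → 1 + invPowSeries g a ≤ ENNReal.ofReal (exp (φ (C * a))))
    (hζm : Measurable ζ) (hζ : Integrable ζ P) (hmean : ∫ ω, ζ ω ∂P = 0) :
    BNorm P φ ζ ≤ ENNReal.ofReal (C * exp 1) * GNorm P ψ ζ := by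
  have hCe : 0 < C * exp 1 := by positivity
  rcases eq_or_ne (GNorm P ψ ζ) ⊤ with hG | hG
  · rw [hG, ENNReal.mul_top (ENNReal.ofReal_pos.2 hCe).ne']
    exact le_top
  refine ENNReal.le_of_forall_pos_le_add fun ε hε _ => ?_
  set γ := (GNorm P ψ ζ).toReal + ε / (C * exp 1)
  have hγ : 0 < γ := by positivity
  have hGγ : GNorm P ψ ζ ≤ ENNReal.ofReal γ := by
    rw [← ENNReal.ofReal_toReal hG]
    exact ENNReal.ofReal_le_ofReal (le_add_of_nonneg_right (by positivity))
  calc BNorm P φ ζ ≤ ENNReal.ofReal (C * exp 1 * γ) :=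
        BNorm_le_ofReal (by positivity)
          (MGFBoundedBy_of_GNorm_le heven h0 hg hψ hCg hζm hζ hmean hγ.le hGγ)
    _ = ENNReal.ofReal (C * exp 1) * GNorm P ψ ζ + ε := by
        rw [mul_add, mul_div_cancel₀ _ hCe.ne', ENNReal.ofReal_add (by positivity) ε.coe_nonneg,
          ENNReal.ofReal_mul hCe.le, ENNReal.ofReal_toReal hG, ENNReal.ofReal_coe_nnreal]

end Equivalence

end Norms

/-- For `φ ∈ Φ` finite on `ℝ` and `ψ(r) = r / φ⁻¹(r)`, there are constants
`C₁(φ), C₂(φ) ∈ (0,∞)` with `‖ζ‖G(ψ) ≤ C₁ ‖ζ‖B(φ)` and `‖ζ‖B(φ) ≤ C₂ ‖ζ‖G(ψ)` for every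
centered random variable `ζ`; in particular the spaces `B(φ)` and `G(ψ)` coincide and their
norms are equivalent. -/
theorem bphi_gpsi_norm_equivalence
    (φ : ℝ → ℝ) (hφ : IsPhiClass φ)
    (invφ : ℝ → ℝ)
    (hinvφ : (∀ x : ℝ, 0 ≤ x → invφ (φ x) = x) ∧
      (∀ y : ℝ, 0 ≤ y → 0 ≤ invφ y ∧ φ (invφ y) = y))
    (ψ : ℝ → ℝ) (hψ : ∀ r : ℝ, 2 ≤ r → ψ r = r / invφ r) :
    ∃ C₁ C₂ : ℝ, 0 < C₁ ∧ 0 < C₂ ∧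
      ∀ (Ω : Type) (_ : MeasurableSpace Ω) (P : Measure Ω), IsProbabilityMeasure P →
        ∀ ζ : Ω → ℝ, Measurable ζ → Integrable ζ P → (∫ ω, ζ ω ∂P) = 0 →
          GNorm P ψ ζ ≤ ENNReal.ofReal C₁ * BNorm P φ ζ ∧
          BNorm P φ ζ ≤ ENNReal.ofReal C₂ * GNorm P ψ ζ := by
  obtain ⟨heven, hconv, -, hnonneg, hzero, ⟨Cm, _, hCm, _, hquad⟩, -⟩ := hφ
  have hf : ConvexOn ℝ (Set.Ici 0) φ :=
    hconv.convexOn.subset (Set.subset_univ _) (convex_Ici 0)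
  have h0 : φ 0 = 0 := (hzero 0).2 rfl
  have hpos : ∀ x, 0 < x → 0 < φ x := fun x hx =>
    (hnonneg x).lt_of_ne' ((hzero x).not.2 hx.ne')
  obtain ⟨C, hC, hCg⟩ := exists_one_add_invPowSeries_le hf h0 hpos hinvφ.2 hCm
    fun x hx hx1 => (hquad x (abs_le.2 ⟨by linarith, hx1⟩)).1
  refine ⟨2, C * exp 1, two_pos, by positivity, fun Ω _ P _ ζ hζm hζ hmean => ⟨?_, ?_⟩⟩
  · exact GNorm_le_two_mul_BNorm heven h0 hinvφ.2 hψ hζm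
  · exact BNorm_le_mul_GNorm heven h0 hinvφ.2 hψ hC hCg hζm hζ hmean
end

section
/- Let φ ∈ Φ with φ finite on all of ℝ, and define ψ(r) = r/φ^{−1}(r) for r ≥ 2, where φ^{−1} is the inverse of φ on [0,∞). Then there exists a constant C₃ = C₃(φ) ∈ (0,∞) such that for every (not necessarily centered) random variable ζ with 0 < ||ζ||G(ψ) < ∞ and all u > 0: P(|ζ| > u) ≤ 2 exp(−φ*(u/(C₃ ||ζ||G(ψ)))). -/
open MeasureTheory Filter Real ENNReal

/-- The Young–Fenchel (Legendre) conjugate `φ*(u) = sup_{λ} (λu − φ(λ))`. -/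
noncomputable def phiStar (φ : ℝ → ℝ) (u : ℝ) : ℝ := ⨆ l : ℝ, (l * u - φ l)

/-!
Markov's inequality for the `r`-th moment gives `P(|ζ| > u) ≤ (‖ζ‖ ψ(r) / u)^r` for every `r ≥ 2`.
Write `v = u / (C₃ ‖ζ‖)` with `C₃ = e K` and pick `s > 0` with `φ(s)/s = K v`. For `r = φ(s)` we
have `ψ(r) = φ(s)/s`, so the Markov bound is exactly `e^{-r}`, while `φ*(v) ≤ φ(s) = r` because the
slope `φ(s)/s` increases. This needs `r ≥ 2`, which `K` guarantees unless `v` is so small that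
`φ*(v) ≤ log 2`, where the bound `2 exp(-φ*(v)) ≥ 1` is trivial.
-/

open Set Topology

section Slope

variable {f : ℝ → ℝ}

theorem StrictConvexOn.strictMonoOn_div_of_map_zero (hf : StrictConvexOn ℝ (Ici 0) f)
    (h0 : f 0 = 0) : StrictMonoOn (fun x => f x / x) (Ioi 0) := by
  intro a ha b hb hab
  simpa [h0] using hf.secant_strict_mono self_mem_Ici (Ioi_subset_Ici_self ha)
    (Ioi_subset_Ici_self hb) (ne_of_gt ha) (ne_of_gt hb) hab

theorem phiStar_le_of_le_div (hnn : ∀ x, 0 ≤ f x) (hmono : MonotoneOn (fun x => f x / x) (Ioi 0))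
    {s v : ℝ} (hs : 0 < s) (hv : 0 ≤ v) (hvs : v ≤ f s / s) : phiStar f v ≤ f s := by
  refine ciSup_le fun l => ?_
  rcases le_or_gt l 0 with hl | hl
  · nlinarith [hnn l, hnn s]
  rcases le_total l s with hls | hsl
  · have hlv : l * v ≤ f s :=
      calc l * v ≤ s * (f s / s) := mul_le_mul hls hvs hv hs.le
        _ = f s := mul_div_cancel₀ _ hs.ne'
    linarith [hnn l]
  · have hlv : l * v ≤ f l := by
      rw [mul_comm, ← le_div_iff₀ hl]
      exact hvs.trans (hmono hs hl hsl)
    linarith [hnn s]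

theorem tendsto_div_nhdsGT_zero_of_le_sq (hnn : ∀ x, 0 ≤ f x) {C : ℝ}
    (hC : ∀ x, |x| ≤ 1 → f x ≤ C * x ^ 2) : Tendsto (fun x => f x / x) (𝓝[>] 0) (𝓝 0) := by
  have hlin : Tendsto (fun x : ℝ => C * x) (𝓝[>] 0) (𝓝 0) := by
    simpa using ((continuous_const_mul C).tendsto 0).mono_left nhdsWithin_le_nhds
  refine tendsto_of_tendsto_of_tendsto_of_le_of_le' tendsto_const_nhds hlin ?_ ?_
  all_goals filter_upwards [Ioc_mem_nhdsGT one_pos] with x hx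
  · exact div_nonneg (hnn x) hx.1.le
  · rw [div_le_iff₀ hx.1]
    calc f x ≤ C * x ^ 2 := hC x (by rw [abs_of_pos hx.1]; exact hx.2)
      _ = C * x * x := by ring

end Slope

namespace IsPhiClass

variable {φ : ℝ → ℝ}

theorem nonneg (hφ : IsPhiClass φ) (x : ℝ) : 0 ≤ φ x := hφ.2.2.2.1 x

theorem map_zero (hφ : IsPhiClass φ) : φ 0 = 0 := (hφ.2.2.2.2.1 0).2 rfl

theorem pos (hφ : IsPhiClass φ) {x : ℝ} (hx : x ≠ 0) : 0 < φ x :=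
  (hφ.nonneg x).lt_of_ne' fun h => hx ((hφ.2.2.2.2.1 x).1 h)

theorem strictMonoOn_div (hφ : IsPhiClass φ) : StrictMonoOn (fun x => φ x / x) (Ioi 0) :=
  (hφ.2.1.subset (subset_univ _) (convex_Ici 0)).strictMonoOn_div_of_map_zero hφ.map_zero

theorem phiStar_le (hφ : IsPhiClass φ) {s v : ℝ} (hs : 0 < s) (hv : 0 ≤ v)
    (hvs : v ≤ φ s / s) : phiStar φ v ≤ φ s :=
  phiStar_le_of_le_div hφ.nonneg hφ.strictMonoOn_div.monotoneOn hs hv hvs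

theorem exists_div_eq (hφ : IsPhiClass φ) {t : ℝ} (ht : 0 < t) :
    ∃ s, 0 < s ∧ φ s / s = t := by
  obtain ⟨-, -, hcont, hnn, -, ⟨_, _, -, -, hbd⟩, htop⟩ := hφ
  have hzero : Tendsto (fun x => φ x / x) (𝓝[>] 0) (𝓝 0) :=
    tendsto_div_nhdsGT_zero_of_le_sq hnn fun x hx => (hbd x hx).2
  have hcont' : ContinuousOn (fun x => φ x / x) (Ioi 0) :=
    hcont.continuousOn.div continuousOn_id fun x hx => ne_of_gt hx
  exact isPreconnected_Ioi.intermediate_value_Ioi (l₁ := 𝓝[>] 0) inf_le_right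
    (le_principal_iff.2 (Ioi_mem_atTop 0)) hcont' hzero htop ht

theorem exists_two_le (hφ : IsPhiClass φ) : ∃ s, 0 < s ∧ 2 ≤ φ s := by
  obtain ⟨s, hφs, hs⟩ :=
    ((hφ.2.2.2.2.2.2.eventually_ge_atTop 2).and (eventually_ge_atTop 1)).exists
  have hs₀ : (0 : ℝ) < s := one_pos.trans_le hs
  refine ⟨s, hs₀, ?_⟩
  rw [le_div_iff₀ hs₀] at hφs
  linarith

theorem exists_pos_phiStar_le (hφ : IsPhiClass φ) {c : ℝ} (hc : 0 < c) :
    ∃ v₀, 0 < v₀ ∧ ∀ v, 0 ≤ v → v ≤ v₀ → phiStar φ v ≤ c := by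
  have hsmall : ∀ᶠ x in 𝓝[>] 0, φ x < c :=
    ((hφ.2.2.1.tendsto 0).eventually (gt_mem_nhds (by rwa [hφ.map_zero]))).filter_mono
      nhdsWithin_le_nhds
  obtain ⟨s, hφs, hs⟩ := (hsmall.and self_mem_nhdsWithin).exists
  exact ⟨φ s / s, div_pos (hφ.pos (ne_of_gt hs)) hs,
    fun v hv hvs => (hφ.phiStar_le hs hv hvs).trans hφs.le⟩

theorem exists_forall_phiStar_le_log_two_or_psi_eq (hφ : IsPhiClass φ) {invφ ψ : ℝ → ℝ}
    (hinvφ : ∀ x : ℝ, 0 ≤ x → invφ (φ x) = x) (hψ : ∀ r : ℝ, 2 ≤ r → ψ r = r / invφ r) :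
    ∃ K, 0 < K ∧ ∀ v, 0 < v →
      phiStar φ v ≤ Real.log 2 ∨ ∃ r, 2 ≤ r ∧ ψ r = K * v ∧ phiStar φ v ≤ r := by
  obtain ⟨v₀, hv₀, hsmall⟩ := hφ.exists_pos_phiStar_le (log_pos one_lt_two)
  obtain ⟨s₂, hs₂, hφs₂⟩ := hφ.exists_two_le
  set t₂ := φ s₂ / s₂
  have ht₂ : 0 < t₂ := div_pos (hφ.pos (ne_of_gt hs₂)) hs₂
  set K := max 1 (t₂ / v₀)
  have hK : 0 < K := lt_max_of_lt_left one_pos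
  refine ⟨K, hK, fun v hv => ?_⟩
  by_cases hKv : K * v < t₂
  · refine .inl (hsmall v hv.le ?_)
    calc v ≤ t₂ / K := by rw [le_div_iff₀ hK, mul_comm]; exact hKv.le
      _ ≤ t₂ / (t₂ / v₀) := by gcongr; exact le_max_right _ _
      _ = v₀ := by field_simp
  · obtain ⟨s, hs, hφs⟩ := hφ.exists_div_eq (mul_pos hK hv)
    have hs₂s : s₂ ≤ s := (hφ.strictMonoOn_div.le_iff_le hs₂ hs).1 (by
      simp only [hφs]; linarith)
    have hr : 2 ≤ φ s :=
      calc 2 ≤ s₂ * t₂ := by rwa [mul_div_cancel₀ _ hs₂.ne']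
        _ ≤ s * (φ s / s) := by rw [hφs]; gcongr; linarith
        _ = φ s := mul_div_cancel₀ _ hs.ne'
    refine .inr ⟨φ s, hr, by rw [hψ _ hr, hinvφ s hs.le, hφs], hφ.phiStar_le hs hv.le ?_⟩
    rw [hφs]
    exact le_mul_of_one_le_left hv.le (le_max_left _ _)

end IsPhiClass

section Moments

variable {Ω : Type*} [MeasurableSpace Ω] {P : Measure Ω} {ψ : ℝ → ℝ} {ζ : Ω → ℝ} {r : ℝ}

theorem lintegral_rpow_le_GNorm_mul_rpow (hr : 2 ≤ r) (hψr : 0 < ψ r) :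
    ∫⁻ ω, ENNReal.ofReal (|ζ ω| ^ r) ∂P ≤ (GNorm P ψ ζ * ENNReal.ofReal (ψ r)) ^ r := by
  have h := le_iSup (fun p : {r : ℝ // 2 ≤ r} =>
    (∫⁻ ω, ENNReal.ofReal (|ζ ω| ^ (p : ℝ)) ∂P) ^ (1 / (p : ℝ)) / ENNReal.ofReal (ψ p)) ⟨r, hr⟩
  rwa [ENNReal.div_le_iff (by simpa using hψr) ofReal_ne_top, one_div,
    ENNReal.rpow_inv_le_iff (by linarith)] at h

theorem toReal_measure_abs_gt_le_rpow (hζ : AEMeasurable ζ P) (hr : 2 ≤ r) (hψr : 0 < ψ r)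
    (hG : GNorm P ψ ζ ≠ ⊤) {u : ℝ} (hu : 0 < u) :
    (P {ω | u < |ζ ω|}).toReal ≤ ((GNorm P ψ ζ).toReal * ψ r / u) ^ r := by
  have hr0 : 0 ≤ r := by linarith
  have hN := ENNReal.toReal_nonneg (a := GNorm P ψ ζ)
  have hmarkov : ENNReal.ofReal (u ^ r) * P {ω | u < |ζ ω|} ≤
      ENNReal.ofReal (((GNorm P ψ ζ).toReal * ψ r) ^ r) :=
    calc ENNReal.ofReal (u ^ r) * P {ω | u < |ζ ω|}
        ≤ ENNReal.ofReal (u ^ r) * P {ω | ENNReal.ofReal (u ^ r) ≤ ENNReal.ofReal (|ζ ω| ^ r)} := by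
          refine mul_le_mul_right (measure_mono fun ω hω => ?_) _
          exact ENNReal.ofReal_le_ofReal (rpow_le_rpow hu.le (le_of_lt hω) hr0)
      _ ≤ ∫⁻ ω, ENNReal.ofReal (|ζ ω| ^ r) ∂P :=
          mul_meas_ge_le_lintegral₀ (hζ.abs.pow_const r).ennreal_ofReal _
      _ ≤ (GNorm P ψ ζ * ENNReal.ofReal (ψ r)) ^ r := lintegral_rpow_le_GNorm_mul_rpow hr hψr
      _ = ENNReal.ofReal (((GNorm P ψ ζ).toReal * ψ r) ^ r) := by
          rw [← ENNReal.ofReal_rpow_of_nonneg (by positivity) hr0, ENNReal.ofReal_mul hN,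
            ofReal_toReal hG]
  have hreal := ENNReal.toReal_mono ofReal_ne_top hmarkov
  rw [ENNReal.toReal_mul, toReal_ofReal (by positivity), toReal_ofReal (by positivity)] at hreal
  rw [div_rpow (by positivity) hu.le, le_div_iff₀ (by positivity), mul_comm]
  exact hreal

end Moments

/-- For `φ ∈ Φ` finite on `ℝ` and `ψ(r) = r / φ⁻¹(r)`, there is a constant
`C₃ = C₃(φ) ∈ (0,∞)` such that every random variable `ζ` with `0 < ‖ζ‖G(ψ) < ∞` satisfies
the tail estimate `P(|ζ| > u) ≤ 2 exp(−φ*(u / (C₃ ‖ζ‖G(ψ))))` for all `u > 0`. -/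
theorem gpsi_tail_estimate
    (φ : ℝ → ℝ) (hφ : IsPhiClass φ)
    (invφ : ℝ → ℝ)
    (hinvφ : (∀ x : ℝ, 0 ≤ x → invφ (φ x) = x) ∧
      (∀ y : ℝ, 0 ≤ y → 0 ≤ invφ y ∧ φ (invφ y) = y))
    (ψ : ℝ → ℝ) (hψ : ∀ r : ℝ, 2 ≤ r → ψ r = r / invφ r) :
    ∃ C₃ : ℝ, 0 < C₃ ∧
      ∀ (Ω : Type) (_ : MeasurableSpace Ω) (P : Measure Ω), IsProbabilityMeasure P →
        ∀ ζ : Ω → ℝ, Measurable ζ →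
          0 < GNorm P ψ ζ → GNorm P ψ ζ ≠ ⊤ →
          ∀ u : ℝ, 0 < u →
            (P {ω | u < |ζ ω|}).toReal ≤
              2 * Real.exp (-(phiStar φ (u / (C₃ * (GNorm P ψ ζ).toReal)))) := by
  obtain ⟨K, hK, hindex⟩ := hφ.exists_forall_phiStar_le_log_two_or_psi_eq hinvφ.1 hψ
  refine ⟨exp 1 * K, by positivity, fun Ω _ P hP ζ hζ hG₀ hG u hu => ?_⟩
  set N := (GNorm P ψ ζ).toReal
  have hN : 0 < N := ENNReal.toReal_pos hG₀.ne' hG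
  set v := u / (exp 1 * K * N) with hv_def
  have hv : 0 < v := by positivity
  rcases hindex v hv with hsmall | ⟨r, hr, hψr, hstar⟩
  · calc (P {ω | u < |ζ ω|}).toReal ≤ 1 := ENNReal.toReal_le_of_le_ofReal zero_le_one
          (by simpa using prob_le_one)
      _ = 2 * exp (-Real.log 2) := by rw [exp_neg, Real.exp_log two_pos]; norm_num
      _ ≤ 2 * exp (-phiStar φ v) := by gcongr
  · have hratio : N * ψ r / u = exp (-1) := by
      rw [hψr, hv_def, exp_neg]; field_simp
    calc (P {ω | u < |ζ ω|}).toReal ≤ (N * ψ r / u) ^ r :=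
          toReal_measure_abs_gt_le_rpow hζ.aemeasurable hr (by rw [hψr]; positivity) hG hu
      _ = exp (-r) := by rw [hratio, ← exp_mul, neg_one_mul]
      _ ≤ exp (-phiStar φ v) := by gcongr
      _ ≤ 2 * exp (-phiStar φ v) := by linarith [exp_pos (-phiStar φ v)]
end

section
/- (Entropy bound for the maximum.) Let φ ∈ Φ with φ finite on all of ℝ, let (T,d) be a compact metric space, and let ξ = {ξ(t), t ∈ T} be a separable centered stochastic process with continuous sample paths such that sup_{t∈T} ||ξ(t)||B(φ) ≤ 1 and ||ξ(t) − ξ(s)||B(φ) ≤ d(s,t) for all s,t ∈ T. Let H(T,d,ε) be the metric entropy of (T,d). If Σ_{n=1}^∞ 2^{−n} H(T,d,2^{−n}) < ∞, then the random variable β = sup_{t∈T} ξ(t) satisfies: there exists a constant C ∈ (0,∞) such that P(|β| > u) ≤ 2 exp(−φ*(u/C)) for all u ≥ 1. -/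
open MeasureTheory Filter Real ENNReal

/-- The minimal number of closed balls of radius `ε` needed to cover a metric space `T`. -/
noncomputable def coveringNumber (T : Type*) [MetricSpace T] (ε : ℝ) : ℕ :=
  sInf {n : ℕ | ∃ s : Finset T, s.card = n ∧ ∀ x : T, ∃ c ∈ s, dist x c ≤ ε}

/-- The metric entropy `H(T,d,ε)`: natural logarithm of the covering number. -/
noncomputable def metricEntropy (T : Type*) [MetricSpace T] (ε : ℝ) : ℝ :=
  Real.log (coveringNumber T ε)

/-!
Chaining. Cover `T` by nets `Nₙ` of mesh `rₙ = 2^{-(n+1)}` with `|Nₙ| ≤ exp Hₙ`. Following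
each `t` down the nets, a continuous path stays below `K (1 + ∑ rₙ sₙ)`, `sₙ = n + 1 + Hₙ + Hₙ₊₁`,
unless it exceeds `K` somewhere on `N₀` or changes by more than `K rₙ sₙ` along one of the
`≤ exp (Hₙ + Hₙ₊₁)` links between `Nₙ` and `Nₙ₊₁`. By Chernoff, `P(|ζ| > u) ≤ 2 exp(-φ*(u/b))`
whenever `‖ζ‖_{B(φ)} < b`, and since `φ*(s x) ≥ s φ*(x)` for `s ≥ 1` the weight `sₙ` turns the
level-`n` union bound into `2 exp(-φ*(K/2) - n)`. For small `u` the claimed bound exceeds `1`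
once `C` is large, because `φ*(x) = O(x)` near `0`.
-/

open scoped Topology

section Conjugate

variable {φ : ℝ → ℝ}

theorem bddAbove_range_mul_sub (hφ_nonneg : ∀ x, 0 ≤ φ x)
    (hφ_super : Tendsto (fun x => φ x / x) atTop atTop) {u : ℝ} (hu : 0 ≤ u) :
    BddAbove (Set.range fun l => l * u - φ l) := by
  obtain ⟨L, hL⟩ :=
    ((hφ_super.eventually_ge_atTop u).and (eventually_ge_atTop 1)).exists_forall_of_atTop
  refine ⟨L * u, ?_⟩
  rintro _ ⟨l, rfl⟩
  rcases le_or_gt l L with hl | hl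
  · nlinarith [hφ_nonneg l]
  · obtain ⟨hφl, hl1⟩ := hL l hl.le
    rw [le_div_iff₀ (by linarith)] at hφl
    nlinarith [(hL L le_rfl).2]

theorem le_phiStar (hφ_nonneg : ∀ x, 0 ≤ φ x)
    (hφ_super : Tendsto (fun x => φ x / x) atTop atTop) {u : ℝ} (hu : 0 ≤ u) (l : ℝ) :
    l * u - φ l ≤ phiStar φ u :=
  le_ciSup (bddAbove_range_mul_sub hφ_nonneg hφ_super hu) l

theorem phiStar_le {u M : ℝ} (h : ∀ l, l * u - φ l ≤ M) : phiStar φ u ≤ M :=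
  ciSup_le h

theorem monotoneOn_phiStar (hφ_even : ∀ x, φ (-x) = φ x) (hφ_nonneg : ∀ x, 0 ≤ φ x)
    (hφ_super : Tendsto (fun x => φ x / x) atTop atTop) :
    MonotoneOn (phiStar φ) (Set.Ici 0) := by
  intro x hx y hy hxy
  refine phiStar_le fun l => ?_
  have hφ_abs : φ |l| = φ l := by
    rcases abs_cases l with ⟨h, -⟩ | ⟨h, -⟩ <;> simp only [h, hφ_even]
  have := le_phiStar hφ_nonneg hφ_super (Set.mem_Ici.mp hy) |l|
  nlinarith [le_abs_self l, abs_nonneg l, Set.mem_Ici.mp hx]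

-- Since `φ ≥ 0` and `k ≥ 1`, `k (l x - φ l) ≤ l (k x) - φ l` for every `l`.
theorem mul_phiStar_le_phiStar_mul (hφ_nonneg : ∀ x, 0 ≤ φ x)
    (hφ_super : Tendsto (fun x => φ x / x) atTop atTop) {k x : ℝ} (hk : 1 ≤ k) (hx : 0 ≤ x) :
    k * phiStar φ x ≤ phiStar φ (k * x) := by
  have hk0 : 0 < k := by linarith
  rw [← le_div_iff₀' hk0]
  refine phiStar_le fun l => ?_
  rw [le_div_iff₀' hk0]
  have := le_phiStar hφ_nonneg hφ_super (u := k * x) (by positivity) l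
  nlinarith [hφ_nonneg l]

theorem tendsto_phiStar_atTop (hφ_nonneg : ∀ x, 0 ≤ φ x)
    (hφ_super : Tendsto (fun x => φ x / x) atTop atTop) : Tendsto (phiStar φ) atTop atTop := by
  refine tendsto_atTop_mono' atTop ?_ (tendsto_atTop_add_const_right _ (-φ 1) tendsto_id)
  filter_upwards [eventually_ge_atTop 0] with x hx
  simpa [sub_eq_add_neg] using le_phiStar hφ_nonneg hφ_super hx 1

theorem exists_phiStar_le_mul (hφ_nonneg : ∀ x, 0 ≤ φ x)
    (hφ_super : Tendsto (fun x => φ x / x) atTop atTop) :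
    ∃ K, 0 ≤ K ∧ ∀ x, 0 ≤ x → x ≤ 1 → phiStar φ x ≤ K * x := by
  obtain ⟨L, hL⟩ :=
    ((hφ_super.eventually_ge_atTop 1).and (eventually_ge_atTop 1)).exists_forall_of_atTop
  have hL1 := (hL L le_rfl).2
  refine ⟨L, by linarith, fun x hx0 hx1 => phiStar_le fun l => ?_⟩
  rcases le_or_gt l L with hl | hl
  · nlinarith [hφ_nonneg l]
  · obtain ⟨hφl, -⟩ := hL l hl.le
    rw [le_div_iff₀ (by linarith)] at hφl
    nlinarith

theorem exp_mul_two_mul_exp_neg_phiStar_le (hφ_nonneg : ∀ x, 0 ≤ φ x)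
    (hφ_super : Tendsto (fun x => φ x / x) atTop atTop) {x G s : ℝ} (n : ℕ) (hx : 0 ≤ x)
    (hG : 0 ≤ G) (hs : (n : ℝ) + 1 + G ≤ s) (hM : 1 ≤ phiStar φ x) :
    exp G * (2 * exp (-phiStar φ (s * x))) ≤ 2 * exp (-phiStar φ x) * exp (-n) := by
  have hscale := mul_phiStar_le_phiStar_mul hφ_nonneg hφ_super (k := s)
    (by linarith [n.cast_nonneg (α := ℝ)]) hx
  have : phiStar φ x + n + G ≤ phiStar φ (s * x) := by nlinarith [n.cast_nonneg (α := ℝ)]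
  rw [mul_left_comm, mul_assoc, ← exp_add, ← exp_add]
  exact mul_le_mul_of_nonneg_left (exp_le_exp.mpr (by linarith)) zero_le_two

end Conjugate

section Chernoff

variable {Ω : Type*} [MeasurableSpace Ω] {P : Measure Ω} {φ : ℝ → ℝ} {ζ : Ω → ℝ}

theorem measure_lt_le_of_lintegral_exp_le (hζ : AEMeasurable ζ P) {l u c : ℝ} (hl : 0 ≤ l)
    (h : ∫⁻ ω, ENNReal.ofReal (exp (l * ζ ω)) ∂P ≤ ENNReal.ofReal (exp c)) :
    P {ω | u < ζ ω} ≤ ENNReal.ofReal (exp (c - l * u)) := by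
  have hsub : {ω | u < ζ ω} ⊆
      {ω | ENNReal.ofReal (exp (l * u)) ≤ ENNReal.ofReal (exp (l * ζ ω))} := fun ω hω =>
    ENNReal.ofReal_le_ofReal (exp_le_exp.mpr (mul_le_mul_of_nonneg_left (le_of_lt hω) hl))
  calc P {ω | u < ζ ω}
      ≤ (∫⁻ ω, ENNReal.ofReal (exp (l * ζ ω)) ∂P) / ENNReal.ofReal (exp (l * u)) :=
        (measure_mono hsub).trans <| meas_ge_le_lintegral_div
          (hζ.const_mul l).exp.ennreal_ofReal (by simp [exp_pos]) ENNReal.ofReal_ne_top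
    _ ≤ ENNReal.ofReal (exp c) / ENNReal.ofReal (exp (l * u)) := by gcongr
    _ = ENNReal.ofReal (exp (c - l * u)) := by
        rw [← ENNReal.ofReal_div_of_pos (exp_pos _), ← exp_sub]

theorem measureReal_lt_le_exp_neg_phiStar [IsProbabilityMeasure P] (hφ_nonneg : ∀ x, 0 ≤ φ x)
    (hζ : AEMeasurable ζ P) {b u : ℝ} (hb : 0 < b) (hu : 0 ≤ u)
    (hmgf : ∀ l, ∫⁻ ω, ENNReal.ofReal (exp (l * ζ ω)) ∂P ≤ ENNReal.ofReal (exp (φ (b * l)))) :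
    P.real {ω | u < ζ ω} ≤ exp (-phiStar φ (u / b)) := by
  rcases measureReal_nonneg.eq_or_lt with hp | hp
  · rw [← hp]
    positivity
  suffices phiStar φ (u / b) ≤ -log (P.real {ω | u < ζ ω}) by
    simpa [exp_log hp] using exp_le_exp.mpr (neg_le_neg this)
  refine phiStar_le fun m => ?_
  suffices P.real {ω | u < ζ ω} ≤ exp (φ m - m * (u / b)) by
    rw [← log_le_iff_le_exp hp] at this
    linarith
  rcases le_or_gt m 0 with hm | hm
  · refine measureReal_le_one.trans (one_le_exp ?_)
    nlinarith [hφ_nonneg m, div_nonneg hu hb.le]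
  · have hchernoff :=
      measure_lt_le_of_lintegral_exp_le (u := u) hζ (div_pos hm hb).le (hmgf (m / b))
    rw [mul_div_cancel₀ m hb.ne', div_mul_eq_mul_div] at hchernoff
    rw [← mul_div_assoc]
    exact ENNReal.toReal_le_of_le_ofReal (exp_pos _).le hchernoff

theorem measureReal_lt_abs_le_two_mul_exp_neg_phiStar [IsProbabilityMeasure P]
    (hφ_even : ∀ x, φ (-x) = φ x) (hφ_nonneg : ∀ x, 0 ≤ φ x)
    (hζ : AEMeasurable ζ P) {b u : ℝ} (hb : 0 < b) (hu : 0 ≤ u)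
    (hmgf : ∀ l, ∫⁻ ω, ENNReal.ofReal (exp (l * ζ ω)) ∂P ≤ ENNReal.ofReal (exp (φ (b * l)))) :
    P.real {ω | u < |ζ ω|} ≤ 2 * exp (-phiStar φ (u / b)) := by
  have hmgf_neg (l : ℝ) :
      ∫⁻ ω, ENNReal.ofReal (exp (l * -ζ ω)) ∂P ≤ ENNReal.ofReal (exp (φ (b * l))) := by
    simpa only [mul_neg, neg_mul, hφ_even] using hmgf (-l)
  have hsplit : {ω | u < |ζ ω|} = {ω | u < ζ ω} ∪ {ω | u < -ζ ω} := by
    ext ω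
    exact lt_abs (a := u)
  rw [hsplit, two_mul]
  exact (measureReal_union_le _ _).trans <| add_le_add
    (measureReal_lt_le_exp_neg_phiStar hφ_nonneg hζ hb hu hmgf)
    (measureReal_lt_le_exp_neg_phiStar hφ_nonneg hζ.neg hb hu hmgf_neg)

theorem exists_lintegral_exp_le_of_bNorm_lt {b : ℝ} (h : BNorm P φ ζ < ENNReal.ofReal b) :
    ∃ τ, 0 < τ ∧ τ ≤ b ∧
      ∀ l, ∫⁻ ω, ENNReal.ofReal (exp (l * ζ ω)) ∂P ≤ ENNReal.ofReal (exp (φ (τ * l))) := by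
  obtain ⟨t, ⟨ht0, ht_top, hmgf⟩, htb⟩ := sInf_lt_iff.mp h
  have hb : 0 < b := ENNReal.ofReal_pos.mp (ht0.trans htb)
  exact ⟨t.toReal, ENNReal.toReal_pos ht0.ne' ht_top,
    ENNReal.toReal_le_of_le_ofReal hb.le htb.le, hmgf⟩

theorem measure_lt_abs_le_of_bNorm_lt [IsProbabilityMeasure P]
    (hφ_even : ∀ x, φ (-x) = φ x) (hφ_nonneg : ∀ x, 0 ≤ φ x)
    (hφ_super : Tendsto (fun x => φ x / x) atTop atTop) (hζ : Measurable ζ) {b u : ℝ}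
    (hB : BNorm P φ ζ < ENNReal.ofReal b) (hu : 0 ≤ u) :
    P {ω | u < |ζ ω|} ≤ ENNReal.ofReal (2 * exp (-phiStar φ (u / b))) := by
  obtain ⟨τ, hτ, hτb, hmgf⟩ := exists_lintegral_exp_le_of_bNorm_lt hB
  have hmono : phiStar φ (u / b) ≤ phiStar φ (u / τ) :=
    monotoneOn_phiStar hφ_even hφ_nonneg hφ_super (div_nonneg hu (hτ.trans_le hτb).le)
      (div_nonneg hu hτ.le) (div_le_div_of_nonneg_left hu hτ hτb)
  rw [← ENNReal.ofReal_toReal (measure_ne_top P _)]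
  refine ENNReal.ofReal_le_ofReal <|
    (measureReal_lt_abs_le_two_mul_exp_neg_phiStar hφ_even hφ_nonneg hζ.aemeasurable hτ hu
      hmgf).trans ?_
  gcongr

end Chernoff

theorem metricEntropy_nonneg (T : Type*) [MetricSpace T] (ε : ℝ) : 0 ≤ metricEntropy T ε :=
  log_natCast_nonneg _

theorem exists_finset_card_le_exp_metricEntropy (T : Type*) [MetricSpace T] [CompactSpace T]
    {ε : ℝ} (hε : 0 < ε) :
    ∃ s : Finset T, (s.card : ℝ) ≤ exp (metricEntropy T ε) ∧ ∀ x, ∃ c ∈ s, dist x c ≤ ε := by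
  obtain ⟨t, -, ht, hcover⟩ := isCompact_univ.finite_cover_balls (X := T) hε
  have hne : {n | ∃ s : Finset T, s.card = n ∧ ∀ x, ∃ c ∈ s, dist x c ≤ ε}.Nonempty := by
    refine ⟨ht.toFinset.card, ht.toFinset, rfl, fun x => ?_⟩
    obtain ⟨c, hc, hxc⟩ := Set.mem_iUnion₂.mp (hcover (Set.mem_univ x))
    exact ⟨c, ht.mem_toFinset.mpr hc, (Metric.mem_ball.mp hxc).le⟩
  obtain ⟨s, hs, hcover⟩ := Nat.sInf_mem hne
  refine ⟨s, ?_, hcover⟩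
  rw [metricEntropy, coveringNumber, ← hs]
  rcases (s.card.cast_nonneg : (0 : ℝ) ≤ s.card).eq_or_lt with h | h
  · rw [← h]
    positivity
  · rw [exp_log h]

section Chaining

variable {T : Type*} [PseudoMetricSpace T]

theorem abs_iSup_le {ι : Type*} {f : ι → ℝ} {u : ℝ} (hu : 0 ≤ u) (h : ∀ i, |f i| ≤ u) :
    |⨆ i, f i| ≤ u := by
  rcases isEmpty_or_nonempty ι with hι | hι
  · simpa [iSup_of_isEmpty] using hu
  have hbdd : BddAbove (Set.range f) := ⟨u, by rintro _ ⟨i, rfl⟩; exact (abs_le.mp (h i)).2⟩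
  exact abs_le.mpr ⟨(abs_le.mp (h hι.some)).1.trans (le_ciSup hbdd hι.some),
    ciSup_le fun j => (abs_le.mp (h j)).2⟩

theorem abs_le_of_chain {f : T → ℝ} (hf : Continuous f) {r : ℕ → ℝ}
    (hr : Tendsto r atTop (𝓝 0)) {proj : ℕ → T → T} (hproj : ∀ n t, dist t (proj n t) ≤ r n)
    {a : ℝ} {b : ℕ → ℝ} (hb : Summable b) (hb_nonneg : ∀ n, 0 ≤ b n)
    (h_root : ∀ t, |f (proj 0 t)| ≤ a)
    (h_link : ∀ n t, |f (proj (n + 1) t) - f (proj n t)| ≤ b n) (t : T) :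
    |f t| ≤ a + ∑' n, b n := by
  have h_partial (m : ℕ) : |f (proj m t)| ≤ a + ∑ n ∈ Finset.range m, b n := by
    induction m with
    | zero => simpa using h_root t
    | succ m ih =>
      rw [Finset.sum_range_succ]
      have := abs_sub_abs_le_abs_sub (f (proj (m + 1) t)) (f (proj m t))
      linarith [h_link m t]
  have hproj_lim : Tendsto (fun m => proj m t) atTop (𝓝 t) :=
    tendsto_iff_dist_tendsto_zero.mpr <|
      squeeze_zero (fun _ => dist_nonneg) (fun m => (dist_comm _ _).trans_le (hproj m t)) hr
  refine le_of_tendsto ((hf.tendsto t).comp hproj_lim).abs (Eventually.of_forall fun m => ?_)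
  exact (h_partial m).trans (by gcongr; exact hb.sum_le_tsum _ fun n _ => hb_nonneg n)

noncomputable def chainLinks (N : ℕ → Finset T) (r : ℕ → ℝ) (n : ℕ) : Finset (T × T) :=
  (N n ×ˢ N (n + 1)).filter fun p => dist p.1 p.2 ≤ r n + r (n + 1)

theorem card_chainLinks_le (N : ℕ → Finset T) (r : ℕ → ℝ) (n : ℕ) :
    (chainLinks N r n).card ≤ (N n).card * (N (n + 1)).card :=
  (Finset.card_filter_le _ _).trans (Finset.card_product _ _).le

theorem measure_lt_abs_iSup_le_chaining {Ω : Type*} [MeasurableSpace Ω] (P : Measure Ω)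
    (ξ : Ω → T → ℝ) (h_cont : ∀ ω, Continuous (ξ ω)) {r : ℕ → ℝ}
    (hr : Tendsto r atTop (𝓝 0)) {N : ℕ → Finset T} (hN : ∀ n t, ∃ c ∈ N n, dist t c ≤ r n)
    {a : ℝ} (ha : 0 ≤ a) {b : ℕ → ℝ} (hb : Summable b) (hb_nonneg : ∀ n, 0 ≤ b n) :
    P {ω | a + ∑' n, b n < |⨆ t, ξ ω t|} ≤
      ∑ c ∈ N 0, P {ω | a < |ξ ω c|} +
        ∑' n, ∑ p ∈ chainLinks N r n, P {ω | b n < |ξ ω p.2 - ξ ω p.1|} := by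
  choose proj hprojN hproj using hN
  have hproj_link (n : ℕ) (t : T) : (proj n t, proj (n + 1) t) ∈ chainLinks N r n := by
    refine Finset.mem_filter.mpr ⟨Finset.mem_product.mpr ⟨hprojN n t, hprojN (n + 1) t⟩, ?_⟩
    exact (dist_triangle_left _ _ t).trans (add_le_add (hproj n t) (hproj (n + 1) t))
  have hsub : {ω | a + ∑' n, b n < |⨆ t, ξ ω t|} ⊆
      (⋃ c ∈ N 0, {ω | a < |ξ ω c|}) ∪
        ⋃ n, ⋃ p ∈ chainLinks N r n, {ω | b n < |ξ ω p.2 - ξ ω p.1|} := by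
    intro ω hω
    by_contra hgood
    simp only [Set.mem_union, Set.mem_iUnion, Set.mem_ofPred_eq, not_or, not_exists,
      not_lt] at hgood
    refine (abs_iSup_le (add_nonneg ha (tsum_nonneg hb_nonneg)) fun t => ?_).not_gt hω
    exact abs_le_of_chain (h_cont ω) hr hproj hb hb_nonneg (fun t => hgood.1 _ (hprojN 0 t))
      (fun n t => hgood.2 n _ (hproj_link n t)) t
  refine (measure_mono hsub).trans <| (measure_union_le _ _).trans <|
    add_le_add (measure_biUnion_finset_le _ _) <| (measure_iUnion_le _).trans ?_
  exact ENNReal.tsum_le_tsum fun n => measure_biUnion_finset_le _ _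

end Chaining

theorem sum_le_ofReal_mul_of_card_le {ι : Type*} {s : Finset ι} {f : ι → ℝ≥0∞} {κ β : ℝ}
    (hκ : (s.card : ℝ) ≤ κ) (hβ : 0 ≤ β) (h : ∀ i ∈ s, f i ≤ ENNReal.ofReal β) :
    ∑ i ∈ s, f i ≤ ENNReal.ofReal (κ * β) := by
  refine (Finset.sum_le_card_nsmul _ _ _ h).trans ?_
  rw [nsmul_eq_mul, ← ENNReal.ofReal_natCast, ← ENNReal.ofReal_mul (Nat.cast_nonneg _)]
  exact ENNReal.ofReal_le_ofReal (mul_le_mul_of_nonneg_right hκ hβ)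

theorem tsum_exp_neg_natCast_le_two : ∑' n : ℕ, exp (-(n : ℝ)) ≤ 2 := by
  have hexp : exp (-1) ≤ 1 / 2 := by
    rw [exp_neg, one_div]
    exact inv_anti₀ two_pos (by linarith [add_one_le_exp (1 : ℝ)])
  have hle (n : ℕ) : exp (-(n : ℝ)) ≤ (1 / 2) ^ n := by
    rw [← mul_neg_one, exp_nat_mul]
    exact pow_le_pow_left₀ (exp_pos _).le hexp n
  calc ∑' n : ℕ, exp (-(n : ℝ)) ≤ ∑' n : ℕ, (1 / 2 : ℝ) ^ n :=
        summable_exp_neg_nat.tsum_le_tsum hle summable_geometric_two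
    _ = 2 := tsum_geometric_two

theorem ofReal_exp_mul_add_tsum_le (H M : ℝ) :
    ENNReal.ofReal (exp H * (2 * exp (-M))) +
        ∑' n : ℕ, ENNReal.ofReal (2 * exp (-M) * exp (-n)) ≤
      ENNReal.ofReal (2 * exp (-M) * (exp H + 2)) := by
  rw [← ENNReal.ofReal_tsum_of_nonneg (fun n => by positivity)
    (summable_exp_neg_nat.mul_left _), tsum_mul_left,
    ← ENNReal.ofReal_add (by positivity) (by positivity)]
  gcongr
  nlinarith [tsum_exp_neg_natCast_le_two, exp_pos (-M)]

theorem rpow_neg_natCast_add_one {x : ℝ} (hx : 0 ≤ x) (n : ℕ) :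
    x ^ (-((n : ℝ) + 1)) = x⁻¹ ^ (n + 1) := by
  rw [← Nat.cast_add_one, rpow_neg hx, Real.rpow_natCast, inv_pow]

theorem exp_neg_mul_exp_add_two_le {M M' H : ℝ} (hH : 0 ≤ H) (hM : 2 * M' ≤ M)
    (hM' : H + 2 ≤ M') : exp (-M) * (exp H + 2) ≤ exp (-M') := by
  have : exp H + 2 ≤ exp (H + 2) := by
    rw [exp_add]
    nlinarith [add_one_le_exp (2 : ℝ), one_le_exp hH]
  calc exp (-M) * (exp H + 2) ≤ exp (-M) * exp (H + 2) := by gcongr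
    _ ≤ exp (-M') := by
      rw [← exp_add]
      gcongr
      linarith

def entropyWeight (H : ℕ → ℝ) (n : ℕ) : ℝ := n + 1 + H n + H (n + 1)

theorem entropyWeight_pos {H : ℕ → ℝ} (hH : ∀ n, 0 ≤ H n) (n : ℕ) : 0 < entropyWeight H n := by
  have := hH n
  have := hH (n + 1)
  rw [entropyWeight]
  positivity

theorem summable_two_inv_pow_mul_entropyWeight {H : ℕ → ℝ}
    (h : Summable fun n => (2⁻¹ : ℝ) ^ (n + 1) * H n) :
    Summable fun n => (2⁻¹ : ℝ) ^ (n + 1) * entropyWeight H n := by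
  have h_lin : Summable fun n : ℕ => (2⁻¹ : ℝ) ^ (n + 1) * (n + 1) := by
    have := (summable_nat_add_iff 1).mpr <|
      summable_pow_mul_geometric_of_norm_lt_one 1 (r := (2⁻¹ : ℝ)) (by norm_num)
    refine this.congr fun n => ?_
    push_cast
    ring
  have h_shift : Summable fun n => (2⁻¹ : ℝ) ^ (n + 1) * H (n + 1) := by
    refine (((summable_nat_add_iff 1).mpr h).mul_left 2).congr fun n => ?_
    ring
  exact ((h_lin.add h).add h_shift).congr fun n => by rw [entropyWeight]; ring

section Entropy

variable {Ω : Type*} [MeasurableSpace Ω] {P : Measure Ω} {φ : ℝ → ℝ}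

theorem measure_lt_abs_iSup_le_of_nets {T : Type*} [PseudoMetricSpace T]
    [IsProbabilityMeasure P] (hφ_even : ∀ x, φ (-x) = φ x) (hφ_nonneg : ∀ x, 0 ≤ φ x)
    (hφ_super : Tendsto (fun x => φ x / x) atTop atTop) (ξ : Ω → T → ℝ)
    (h_meas : ∀ t, Measurable fun ω => ξ ω t) (h_cont : ∀ ω, Continuous (ξ ω))
    (h_bnorm : ∀ t, BNorm P φ (fun ω => ξ ω t) ≤ 1)
    (h_incr : ∀ s t, BNorm P φ (fun ω => ξ ω t - ξ ω s) ≤ ENNReal.ofReal (dist s t))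
    {r : ℕ → ℝ} (hr_anti : StrictAnti r) (hr : Tendsto r atTop (𝓝 0))
    {N : ℕ → Finset T} (hN : ∀ n t, ∃ c ∈ N n, dist t c ≤ r n)
    {H : ℕ → ℝ} (hH : ∀ n, 0 ≤ H n) (hN_card : ∀ n, ((N n).card : ℝ) ≤ exp (H n))
    (hsum : Summable fun n => r n * entropyWeight H n)
    {K : ℝ} (hK : 0 ≤ K) (hM : 1 ≤ phiStar φ (K / 2)) :
    P {ω | K * (1 + ∑' n, r n * entropyWeight H n) < |⨆ t, ξ ω t|} ≤
      ENNReal.ofReal (2 * exp (-phiStar φ (K / 2)) * (exp (H 0) + 2)) := by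
  have hr_pos (n : ℕ) : 0 < r n :=
    (hr_anti.antitone.le_of_tendsto hr (n + 1)).trans_lt (hr_anti n.lt_succ_self)
  have hs_pos := entropyWeight_pos hH
  have h_chain := measure_lt_abs_iSup_le_chaining P ξ h_cont hr hN hK
    (hsum.mul_left K) fun n => mul_nonneg hK (mul_nonneg (hr_pos n).le (hs_pos n).le)
  rw [tsum_mul_left, ← mul_one_add] at h_chain
  set M := phiStar φ (K / 2)
  have h_root : ∑ c ∈ N 0, P {ω | K < |ξ ω c|} ≤ ENNReal.ofReal (exp (H 0) * (2 * exp (-M))) :=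
    sum_le_ofReal_mul_of_card_le (hN_card 0) (by positivity) fun c _ =>
      measure_lt_abs_le_of_bNorm_lt hφ_even hφ_nonneg hφ_super (h_meas c)
        ((h_bnorm c).trans_lt (ENNReal.one_lt_ofReal.mpr one_lt_two)) hK
  have h_link (n : ℕ) :
      ∑ p ∈ chainLinks N r n, P {ω | K * (r n * entropyWeight H n) < |ξ ω p.2 - ξ ω p.1|} ≤
        ENNReal.ofReal (2 * exp (-M) * exp (-n)) := by
    have h_card : ((chainLinks N r n).card : ℝ) ≤ exp (H n + H (n + 1)) := by
      rw [exp_add]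
      exact (Nat.cast_le.mpr (card_chainLinks_le N r n)).trans
        (by push_cast; gcongr <;> exact hN_card _)
    refine (sum_le_ofReal_mul_of_card_le h_card (by positivity) fun p hp => ?_).trans
      (ENNReal.ofReal_le_ofReal <| exp_mul_two_mul_exp_neg_phiStar_le hφ_nonneg hφ_super n
        (s := entropyWeight H n) (by positivity) (add_nonneg (hH n) (hH (n + 1)))
        (by rw [entropyWeight]; linarith) hM)
    have h_dist : BNorm P φ (fun ω => ξ ω p.2 - ξ ω p.1) < ENNReal.ofReal (2 * r n) :=
      (h_incr p.1 p.2).trans_lt <| (ENNReal.ofReal_lt_ofReal_iff (by linarith [hr_pos n])).mpr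
        (by linarith [hr_anti n.lt_succ_self, (Finset.mem_filter.mp hp).2])
    have h_tail := measure_lt_abs_le_of_bNorm_lt hφ_even hφ_nonneg hφ_super
      ((h_meas p.2).sub (h_meas p.1)) h_dist (u := K * (r n * entropyWeight H n))
      (by have := hr_pos n; have := hs_pos n; positivity)
    rwa [show K * (r n * entropyWeight H n) / (2 * r n) = entropyWeight H n * (K / 2) by
      field_simp [(hr_pos n).ne']] at h_tail
  exact h_chain.trans <| (add_le_add h_root (ENNReal.tsum_le_tsum h_link)).trans
    (ofReal_exp_mul_add_tsum_le _ _)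

theorem exists_eventually_measureReal_lt_abs_iSup_le [IsProbabilityMeasure P]
    (hφ_even : ∀ x, φ (-x) = φ x) (hφ_nonneg : ∀ x, 0 ≤ φ x)
    (hφ_super : Tendsto (fun x => φ x / x) atTop atTop)
    {T : Type*} [MetricSpace T] [CompactSpace T] (ξ : Ω → T → ℝ)
    (h_meas : ∀ t, Measurable fun ω => ξ ω t) (h_cont : ∀ ω, Continuous (ξ ω))
    (h_bnorm : ∀ t, BNorm P φ (fun ω => ξ ω t) ≤ 1)
    (h_incr : ∀ s t, BNorm P φ (fun ω => ξ ω t - ξ ω s) ≤ ENNReal.ofReal (dist s t))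
    (h_entropy : Summable fun n => (2⁻¹ : ℝ) ^ (n + 1) * metricEntropy T (2⁻¹ ^ (n + 1))) :
    ∃ c, 0 < c ∧
      ∀ᶠ u in atTop, P.real {ω | u < |⨆ t, ξ ω t|} ≤ 2 * exp (-phiStar φ (u / c)) := by
  set r : ℕ → ℝ := fun n => 2⁻¹ ^ (n + 1)
  set H : ℕ → ℝ := fun n => metricEntropy T (r n)
  have hH (n : ℕ) : 0 ≤ H n := metricEntropy_nonneg T _
  have hr_anti : StrictAnti r := fun m n hmn =>
    pow_lt_pow_right_of_lt_one₀ (by norm_num) (by norm_num) (by omega)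
  have hr : Tendsto r atTop (𝓝 0) :=
    (_root_.tendsto_pow_atTop_nhds_zero_of_lt_one (by norm_num) (by norm_num)).comp
      (tendsto_add_atTop_nat 1)
  choose N hN_card hN using fun n => exists_finset_card_le_exp_metricEntropy T (ε := r n)
    (by positivity)
  set A := ∑' n, r n * entropyWeight H n
  have hA : 0 ≤ A := tsum_nonneg fun n => mul_nonneg (by positivity) (entropyWeight_pos hH n).le
  have hA1 : 0 < 1 + A := by linarith
  have hc : 0 < 4 * (1 + A) := by positivity
  refine ⟨4 * (1 + A), hc, ?_⟩
  filter_upwards [eventually_ge_atTop 0, ((tendsto_phiStar_atTop hφ_nonneg hφ_super).comp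
    (tendsto_id.atTop_div_const hc)).eventually_ge_atTop (H 0 + 2)] with u hu hM
  simp only [Function.comp_apply, id] at hM
  have hM2 : 2 * phiStar φ (u / (4 * (1 + A))) ≤ phiStar φ (u / (1 + A) / 2) := by
    rw [show u / (1 + A) / 2 = 2 * (u / (4 * (1 + A))) by field_simp; ring]
    exact mul_phiStar_le_phiStar_mul hφ_nonneg hφ_super one_le_two (by positivity)
  have h_nets := measure_lt_abs_iSup_le_of_nets hφ_even hφ_nonneg hφ_super ξ h_meas h_cont
    h_bnorm h_incr hr_anti hr hN hH hN_card (summable_two_inv_pow_mul_entropyWeight h_entropy)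
    (K := u / (1 + A)) (by positivity) (by linarith [hH 0])
  rw [div_mul_cancel₀ u (by positivity)] at h_nets
  calc P.real {ω | u < |⨆ t, ξ ω t|}
      ≤ 2 * exp (-phiStar φ (u / (1 + A) / 2)) * (exp (H 0) + 2) :=
        ENNReal.toReal_le_of_le_ofReal (by positivity) h_nets
    _ ≤ 2 * exp (-phiStar φ (u / (4 * (1 + A)))) := by
        rw [mul_assoc]
        gcongr
        exact exp_neg_mul_exp_add_two_le (hH 0) hM2 hM

theorem exists_forall_le_two_mul_exp_neg_phiStar (hφ_even : ∀ x, φ (-x) = φ x)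
    (hφ_nonneg : ∀ x, 0 ≤ φ x) (hφ_super : Tendsto (fun x => φ x / x) atTop atTop)
    {p : ℝ → ℝ} (hp : ∀ u, p u ≤ 1) {c : ℝ} (hc : 0 < c)
    (h : ∀ᶠ u in atTop, p u ≤ 2 * exp (-phiStar φ (u / c))) :
    ∃ C, 0 < C ∧ ∀ u, 0 ≤ u → p u ≤ 2 * exp (-phiStar φ (u / C)) := by
  obtain ⟨u₀, hu₀⟩ := (h.and (eventually_ge_atTop 0)).exists_forall_of_atTop
  have hu₀0 : 0 ≤ u₀ := (hu₀ u₀ le_rfl).2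
  obtain ⟨K, hK, hφK⟩ := exists_phiStar_le_mul hφ_nonneg hφ_super
  have hlog2 : 0 < Real.log 2 := log_pos one_lt_two
  set C := c + u₀ + K * u₀ / Real.log 2
  have hcC : c + u₀ ≤ C := le_add_of_nonneg_right (by positivity)
  have hKu₀ : K * u₀ ≤ Real.log 2 * C := by
    have : Real.log 2 * (K * u₀ / Real.log 2) = K * u₀ := by field_simp
    nlinarith
  have hC : 0 < C := by positivity
  refine ⟨C, hC, fun u hu => ?_⟩
  rcases le_or_gt u₀ u with hlarge | hsmall
  · refine (hu₀ u hlarge).1.trans ?_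
    have : phiStar φ (u / C) ≤ phiStar φ (u / c) :=
      monotoneOn_phiStar hφ_even hφ_nonneg hφ_super (div_nonneg hu hC.le) (div_nonneg hu hc.le)
        (div_le_div_of_nonneg_left hu hc (by linarith))
    gcongr
  · have h_small : phiStar φ (u / C) ≤ Real.log 2 := by
      refine (hφK _ (by positivity) (div_le_one_of_le₀ (by linarith) hC.le)).trans ?_
      rw [mul_div_assoc', div_le_iff₀ hC]
      nlinarith
    calc p u ≤ 1 := hp u
      _ = 2 * exp (-Real.log 2) := by rw [exp_neg, exp_log two_pos]; norm_num
      _ ≤ 2 * exp (-phiStar φ (u / C)) := by gcongr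

end Entropy

theorem entropy_tail_bound_for_maximum_general
    {Ω : Type*} [MeasurableSpace Ω] (P : Measure Ω) [IsProbabilityMeasure P]
    (φ : ℝ → ℝ) (hφ : IsPhiClass φ)
    (T : Type*) [MetricSpace T] [CompactSpace T]
    (ξ : Ω → T → ℝ)
    (h_meas : ∀ t : T, Measurable (fun ω => ξ ω t))
    (h_cont : ∀ ω : Ω, Continuous (ξ ω))
    (h_bnorm : ∀ t : T, BNorm P φ (fun ω => ξ ω t) ≤ 1)
    (h_incr : ∀ s t : T, BNorm P φ (fun ω => ξ ω t - ξ ω s) ≤ ENNReal.ofReal (dist s t))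
    (h_entropy : Summable (fun n : ℕ =>
      (2 : ℝ) ^ (-((n : ℝ) + 1)) * metricEntropy T ((2 : ℝ) ^ (-((n : ℝ) + 1))))) :
    ∃ C : ℝ, 0 < C ∧ ∀ u : ℝ, 1 ≤ u →
      (P {ω | u < |⨆ t : T, ξ ω t|}).toReal ≤
        2 * Real.exp (-(phiStar φ (u / C))) := by
  obtain ⟨hφ_even, -, -, hφ_nonneg, -, -, hφ_super⟩ := hφ
  simp only [rpow_neg_natCast_add_one zero_le_two] at h_entropy
  obtain ⟨c, hc, h_large⟩ := exists_eventually_measureReal_lt_abs_iSup_le hφ_even hφ_nonneg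
    hφ_super ξ h_meas h_cont h_bnorm h_incr h_entropy
  obtain ⟨C, hC, h_bound⟩ := exists_forall_le_two_mul_exp_neg_phiStar hφ_even hφ_nonneg
    hφ_super (fun _ => measureReal_le_one) hc h_large
  exact ⟨C, hC, fun u hu => h_bound u (by linarith)⟩

/-- Entropy bound for the maximum: if a centered process `ξ` on a compact metric space
`(T,d)` with continuous paths satisfies `sup_t ‖ξ(t)‖B(φ) ≤ 1`,
`‖ξ(t) − ξ(s)‖B(φ) ≤ d(s,t)`, and the entropy series `Σ 2^{-n} H(T,d,2^{-n})` converges,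
then `β = sup_t ξ(t)` satisfies `P(|β| > u) ≤ 2 exp(−φ*(u/C))` for all `u ≥ 1` and some
constant `C ∈ (0,∞)`. -/
theorem entropy_tail_bound_for_maximum
    {Ω : Type*} [MeasurableSpace Ω] (P : Measure Ω) [IsProbabilityMeasure P]
    (φ : ℝ → ℝ) (hφ : IsPhiClass φ)
    (T : Type*) [MetricSpace T] [CompactSpace T] [Nonempty T]
    (ξ : Ω → T → ℝ)
    (h_meas : ∀ t : T, Measurable (fun ω => ξ ω t))
    (h_cont : ∀ ω : Ω, Continuous (ξ ω))
    (h_cent : ∀ t : T, Integrable (fun ω => ξ ω t) P ∧ (∫ ω, ξ ω t ∂P) = 0)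
    (h_bnorm : ∀ t : T, BNorm P φ (fun ω => ξ ω t) ≤ 1)
    (h_incr : ∀ s t : T, BNorm P φ (fun ω => ξ ω t - ξ ω s) ≤ ENNReal.ofReal (dist s t))
    (h_entropy : Summable (fun n : ℕ =>
      (2 : ℝ) ^ (-((n : ℝ) + 1)) * metricEntropy T ((2 : ℝ) ^ (-((n : ℝ) + 1))))) :
    ∃ C : ℝ, 0 < C ∧ ∀ u : ℝ, 1 ≤ u →
      (P {ω | u < |⨆ t : T, ξ ω t|}).toReal ≤
        2 * Real.exp (-(phiStar φ (u / C))) :=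
  entropy_tail_bound_for_maximum_general P φ hφ T ξ h_meas h_cont h_bnorm h_incr h_entropy
end

section
/- Let p > 1 and q = p/(p−1), and let φ_p(λ) = λ² for |λ| ≤ 1, φ_p(λ) = |λ|^p for |λ| > 1, and similarly φ_q. Then the Young–Fenchel conjugate φ_p* satisfies φ_p* ≍ φ_q, i.e. there exist constants 0 < c₁ ≤ c₂ < ∞ such that c₁ φ_q(u) ≤ φ_p*(u) ≤ c₂ φ_q(u) for all u ∈ ℝ. -/
open Filter Real

/-- The function `φ_p(λ) = λ²` for `|λ| ≤ 1` and `φ_p(λ) = |λ|^p` for `|λ| > 1`. -/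
noncomputable def phiP (p : ℝ) (l : ℝ) : ℝ := if |l| ≤ 1 then l ^ 2 else |l| ^ p

/-!
The upper bound `φ_p* ≤ φ_q` is a Young-type inequality `l u ≤ φ_p(l) + φ_q(u)`: for `|l|, |u| ≤ 1`
it is `2ab ≤ a² + b²`, when exactly one of them exceeds `1` the product is at most the larger one,
and when both do it is Young's inequality for the exponents `p, q`.

For the lower bound it suffices to test the supremum at one point. For `|u| ≤ 1` take `l = u/2`.
Otherwise, both sides being even, let `u > 1` and write `u = s^(p-1)` with `s = u^(q-1) ≥ 1`, so
that `φ_q(u) = s^p = s u`; then `l = s/2` gives `(1/2 - 1/2^p) s^p` when `s ≥ 2`, and `l = 1/2`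
gives `u/2 - 1/4 ≥ s^p/8` when `s < 2`.
-/

namespace phiP

variable {p q : ℝ}

lemma even (p : ℝ) : (phiP p).Even := by
  intro l
  simp only [phiP, abs_neg, neg_sq]

lemma nonneg (p l : ℝ) : 0 ≤ phiP p l := by
  unfold phiP
  split_ifs
  · positivity
  · exact rpow_nonneg (abs_nonneg l) p

lemma eq_abs_rpow_of_one_le_abs (p : ℝ) {l : ℝ} (hl : 1 ≤ |l|) : phiP p l = |l| ^ p := by
  unfold phiP
  split_ifs with h
  · rw [← sq_abs, le_antisymm h hl, one_pow, one_rpow]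
  · rfl

lemma abs_le_of_one_le_abs (hp : 1 ≤ p) {l : ℝ} (hl : 1 ≤ |l|) : |l| ≤ phiP p l := by
  rw [eq_abs_rpow_of_one_le_abs p hl]
  exact self_le_rpow_of_one_le hl hp

lemma mul_le_add (hpq : p.HolderConjugate q) (l u : ℝ) : l * u ≤ phiP p l + phiP q u := by
  have hlu : l * u ≤ |l| * |u| := (le_abs_self _).trans (abs_mul l u).le
  refine hlu.trans ?_
  have hφl := nonneg p l
  have hφu := nonneg q u
  rcases le_or_gt |l| 1 with hl | hl <;> rcases le_or_gt |u| 1 with hu | hu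
  · simp only [phiP, if_pos hl, if_pos hu, ← sq_abs l, ← sq_abs u]
    nlinarith [two_mul_le_add_sq |l| |u|, abs_nonneg l, abs_nonneg u]
  · have := abs_le_of_one_le_abs hpq.symm.lt.le hu.le
    nlinarith [abs_nonneg l, abs_nonneg u]
  · have := abs_le_of_one_le_abs hpq.lt.le hl.le
    nlinarith [abs_nonneg l, abs_nonneg u]
  · rw [eq_abs_rpow_of_one_le_abs p hl.le, eq_abs_rpow_of_one_le_abs q hu.le]
    have hyoung := young_inequality_of_nonneg (abs_nonneg l) (abs_nonneg u) hpq
    have hp' := div_le_self (rpow_nonneg (abs_nonneg l) p) hpq.lt.le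
    have hq' := div_le_self (rpow_nonneg (abs_nonneg u) q) hpq.symm.lt.le
    linarith

end phiP

lemma Function.Even.apply_abs {β : Type*} {f : ℝ → β} (hf : f.Even) (x : ℝ) : f |x| = f x := by
  rcases abs_choice x with h | h <;> rw [h]
  exact hf x

lemma phiStar_even {φ : ℝ → ℝ} (hφ : φ.Even) : (phiStar φ).Even := by
  intro u
  unfold phiStar
  rw [← (Equiv.neg ℝ).iSup_comp]
  exact iSup_congr fun l => by rw [Equiv.neg_apply, neg_mul_neg, hφ l]

section conjugate

variable {p q : ℝ}

lemma phiStar_phiP_le (hpq : p.HolderConjugate q) (u : ℝ) : phiStar (phiP p) u ≤ phiP q u :=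
  ciSup_le fun l => sub_le_iff_le_add'.2 (phiP.mul_le_add hpq l u)

lemma le_phiStar_phiP (hpq : p.HolderConjugate q) (l u : ℝ) :
    l * u - phiP p l ≤ phiStar (phiP p) u := by
  refine le_ciSup (f := fun l => l * u - phiP p l) ⟨phiP q u, Set.forall_mem_range.2 fun l' => ?_⟩ l
  exact sub_le_iff_le_add'.2 (phiP.mul_le_add hpq l' u)

noncomputable def phiStarLowerConst (p : ℝ) : ℝ := min (1 / 8) (1 / 2 - 1 / 2 ^ p)

lemma phiStarLowerConst_pos (hp : 1 < p) : 0 < phiStarLowerConst p := by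
  have h2p : (2 : ℝ) < 2 ^ p := by simpa using rpow_lt_rpow_of_exponent_lt one_lt_two hp
  refine lt_min (by norm_num) (sub_pos.2 ?_)
  exact one_div_lt_one_div_of_lt two_pos h2p

lemma phiStarLowerConst_mul_rpow_le (hpq : p.HolderConjugate q) {s : ℝ} (hs : 1 ≤ s) :
    phiStarLowerConst p * s ^ p ≤ phiStar (phiP p) (s ^ (p - 1)) := by
  have hp := hpq.lt
  have hs0 : 0 < s := one_pos.trans_le hs
  have hsp : s ^ p = s * s ^ (p - 1) := by
    rw [← rpow_one_add' hs0.le (by linarith)]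
    ring_nf
  have hsp0 : 0 ≤ s ^ p := rpow_nonneg hs0.le p
  rcases lt_or_ge s 2 with hs2 | hs2
  · have hφ : phiP p (1 / 2) = 1 / 4 := by norm_num [phiP]
    have hu : 1 ≤ s ^ (p - 1) := one_le_rpow hs (by linarith)
    calc phiStarLowerConst p * s ^ p ≤ 1 / 8 * s ^ p :=
          mul_le_mul_of_nonneg_right (min_le_left _ _) hsp0
      _ ≤ 1 / 2 * s ^ (p - 1) - phiP p (1 / 2) := by
          rw [hφ, hsp]; nlinarith
      _ ≤ phiStar (phiP p) (s ^ (p - 1)) := le_phiStar_phiP hpq _ _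
  · have hl : 1 ≤ |s / 2| := by rw [abs_of_pos (by positivity)]; linarith
    calc phiStarLowerConst p * s ^ p ≤ (1 / 2 - 1 / 2 ^ p) * s ^ p :=
          mul_le_mul_of_nonneg_right (min_le_right _ _) hsp0
      _ = s / 2 * s ^ (p - 1) - phiP p (s / 2) := by
          rw [phiP.eq_abs_rpow_of_one_le_abs p hl, abs_of_pos (by positivity),
            div_rpow hs0.le two_pos.le, hsp]
          ring
      _ ≤ phiStar (phiP p) (s ^ (p - 1)) := le_phiStar_phiP hpq _ _

lemma phiStarLowerConst_mul_phiP_le (hpq : p.HolderConjugate q) (u : ℝ) :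
    phiStarLowerConst p * phiP q u ≤ phiStar (phiP p) u := by
  rcases le_or_gt |u| 1 with hu | hu
  · have hu2 : |u / 2| ≤ 1 := by rw [abs_div, abs_two]; linarith
    calc phiStarLowerConst p * phiP q u ≤ 1 / 8 * u ^ 2 := by
          rw [phiP, if_pos hu]
          exact mul_le_mul_of_nonneg_right (min_le_left _ _) (sq_nonneg u)
      _ ≤ u / 2 * u - phiP p (u / 2) := by
          rw [phiP, if_pos hu2]
          nlinarith [sq_nonneg u]
      _ ≤ phiStar (phiP p) u := le_phiStar_phiP hpq _ _
  · rw [← (phiStar_even (phiP.even p)).apply_abs, ← (phiP.even q).apply_abs]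
    have hu' : 1 ≤ |(|u|)| := by rw [abs_abs]; exact hu.le
    have hs : 1 ≤ |u| ^ (q - 1) := one_le_rpow hu.le (by linarith [hpq.symm.lt])
    have hqp : (q - 1) * (p - 1) = 1 := by linear_combination hpq.mul_eq_add
    have hus : (|u| ^ (q - 1)) ^ (p - 1) = |u| := by
      rw [← rpow_mul (abs_nonneg u), hqp, rpow_one]
    have hφq : phiP q |u| = (|u| ^ (q - 1)) ^ p := by
      rw [phiP.eq_abs_rpow_of_one_le_abs q hu', abs_abs, ← rpow_mul (abs_nonneg u),
        hpq.symm.sub_one_mul_conj]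
    rw [hφq]
    nth_rewrite 2 [← hus]
    exact phiStarLowerConst_mul_rpow_le hpq hs

end conjugate

/-- For `p > 1` and the conjugate exponent `q = p/(p−1)`, the Young–Fenchel conjugate of
`φ_p` is weakly equivalent to `φ_q`: there are constants `0 < c₁ ≤ c₂ < ∞` with
`c₁ φ_q(u) ≤ φ_p*(u) ≤ c₂ φ_q(u)` for all `u ∈ ℝ`. -/
theorem phiP_conjugate_equiv_phiQ (p q : ℝ) (hp : 1 < p) (hq : q = p / (p - 1)) :
    ∃ c₁ c₂ : ℝ, 0 < c₁ ∧ c₁ ≤ c₂ ∧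
      ∀ u : ℝ, c₁ * phiP q u ≤ phiStar (phiP p) u ∧ phiStar (phiP p) u ≤ c₂ * phiP q u := by
  have hpq : p.HolderConjugate q := (holderConjugate_iff_eq_conjExponent hp).2 hq
  have hc : phiStarLowerConst p ≤ 1 := (min_le_left _ _).trans (by norm_num)
  refine ⟨phiStarLowerConst p, 1, phiStarLowerConst_pos hp, hc, fun u => ⟨?_, ?_⟩⟩
  · exact phiStarLowerConst_mul_phiP_le hpq u
  · rw [one_mul]
    exact phiStar_phiP_le hpq u
end
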